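/- arXiv:1405.2890 — 9 statements merged into one kernel-verified Lean document; each statement's English description precedes it below -/
import Mathlib

section
/- For any real numbers $k_1, k_2, k_3, k_4$ with $k_3 \geq k_1 \geq 1$ and any $b$ with $1/2 < b < 1$, there exists a constant $C$ depending only on $b$ such that $\int_{\mathbb{R}} \frac{d\tau}{(k_1 + |\tau - k_2|)^{2b} (k_3 + |\tau - k_4|)^{2b}} \leq \frac{C}{k_1^{2b-1} (k_3 + |k_2 - k_4|)^{2b}}$. -/
open MeasureTheory Real

lemma integ_aux (b a : ℝ) (hb1 : 1/2 < b) (ha : 1 ≤ a) :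
    Integrable (fun τ : ℝ => (a + |τ|) ^ (-(2*b))) := by
  have h1 : Integrable (fun τ : ℝ => (1 + ‖τ‖) ^ (-(2*b))) :=
    integrable_one_add_norm (E := ℝ) (by simp; linarith)
  refine h1.mono' ?_ ?_
  · apply Continuous.aestronglyMeasurable
    apply Continuous.rpow_const (by continuity)
    intro x; left; positivity
  · filter_upwards with x
    have h0 : (0:ℝ) < a + |x| := by positivity
    rw [Real.norm_eq_abs, abs_of_nonneg (rpow_nonneg h0.le _), Real.norm_eq_abs]
    exact Real.rpow_le_rpow_of_nonpos (by positivity) (by linarith) (by linarith)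

lemma val_aux (b a : ℝ) (hb1 : 1/2 < b) (hb2 : b < 1) (ha : 1 ≤ a) :
    ∫ τ : ℝ, (a + |τ|) ^ (-(2*b)) = 2 * (a ^ (1 - 2*b) / (2*b - 1)) := by
  have ha0 : (0:ℝ) < a := by linarith
  rw [integral_comp_abs (f := fun x => (a + x) ^ (-(2*b)))]
  have htrans : ∫ x in Set.Ioi (0:ℝ), (fun y => y ^ (-(2*b))) (x + a)
      = ∫ y in Set.Ioi a, y ^ (-(2*b)) := by
    have := (measurePreserving_add_right volume a).setIntegral_preimage_emb
      (measurableEmbedding_addRight a) (fun y => y ^ (-(2*b))) (Set.Ioi a)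
    simpa using this
  simp only [add_comm a] at htrans ⊢
  rw [htrans, integral_Ioi_rpow_of_lt (by linarith) ha0]
  rw [show -(2*b) + 1 = 1 - 2*b by ring]
  rw [show (1:ℝ) - 2*b = -(2*b-1) by ring, neg_div_neg_eq]

theorem stmt_0 (b : ℝ) (hb1 : 1/2 < b) (hb2 : b < 1) :
    ∃ C > 0, ∀ k1 k2 k3 k4 : ℝ, 1 ≤ k1 → k1 ≤ k3 →
      ∫ τ : ℝ, 1 / ((k1 + |τ - k2|) ^ (2*b) * (k3 + |τ - k4|) ^ (2*b)) ≤
        C / (k1 ^ (2*b - 1) * (k3 + |k2 - k4|) ^ (2*b)) := by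
  have hb0 : (0:ℝ) < 2*b - 1 := by linarith
  refine ⟨(2:ℝ) ^ (2*b) * (4 / (2*b - 1)), by positivity, ?_⟩
  intro k1 k2 k3 k4 hk1 hk13
  have hk3 : (1:ℝ) ≤ k3 := le_trans hk1 hk13
  set M : ℝ := k3 + |k2 - k4| with hMdef
  have hM : (1:ℝ) ≤ M := by
    have := abs_nonneg (k2 - k4); simp only [hMdef]; linarith
  have hM0 : (0:ℝ) < M := by linarith
  -- the dominating function
  set g : ℝ → ℝ := fun τ =>
    (2 / M) ^ (2*b) * ((k1 + |τ - k2|) ^ (-(2*b)) + (k3 + |τ - k4|) ^ (-(2*b))) with hgdef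
  have hint2 : Integrable (fun τ : ℝ => (k1 + |τ - k2|) ^ (-(2*b))) :=
    (integ_aux b k1 hb1 hk1).comp_sub_right k2
  have hint4 : Integrable (fun τ : ℝ => (k3 + |τ - k4|) ^ (-(2*b))) :=
    (integ_aux b k3 hb1 hk3).comp_sub_right k4
  have hgint : Integrable g := ((hint2.add hint4).const_mul _)
  -- pointwise bound
  have hptwise : ∀ τ : ℝ,
      1 / ((k1 + |τ - k2|) ^ (2*b) * (k3 + |τ - k4|) ^ (2*b)) ≤ g τ := by
    intro τ
    set A : ℝ := k1 + |τ - k2| with hAdef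
    set B : ℝ := k3 + |τ - k4| with hBdef
    have hA : (1:ℝ) ≤ A := by have := abs_nonneg (τ - k2); simp only [hAdef]; linarith
    have hB : (1:ℝ) ≤ B := by have := abs_nonneg (τ - k4); simp only [hBdef]; linarith
    have hA0 : (0:ℝ) < A := by linarith
    have hB0 : (0:ℝ) < B := by linarith
    have hAB : M ≤ A + B := by
      have h1 : |k2 - k4| ≤ |τ - k2| + |τ - k4| := by
        have : k2 - k4 = (τ - k4) - (τ - k2) := by ring
        rw [this]
        calc |(τ - k4) - (τ - k2)| ≤ |τ - k4| + |τ - k2| := abs_sub _ _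
          _ = |τ - k2| + |τ - k4| := by ring
      simp only [hAdef, hBdef, hMdef]; linarith
    have hLHS : 1 / (A ^ (2*b) * B ^ (2*b)) = A ^ (-(2*b)) * B ^ (-(2*b)) := by
      rw [Real.rpow_neg hA0.le, Real.rpow_neg hB0.le, one_div, mul_inv]
    have hhalf : (M / 2) ^ (-(2*b)) = (2 / M) ^ (2*b) := by
      rw [Real.rpow_neg (by positivity), ← Real.inv_rpow (by positivity), inv_div]
    rcases le_total A B with hc | hc
    · have hBM : M / 2 ≤ B := by linarith
      have h1 : B ^ (-(2*b)) ≤ (M/2) ^ (-(2*b)) :=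
        Real.rpow_le_rpow_of_nonpos (by positivity) hBM (by linarith)
      calc 1 / (A ^ (2*b) * B ^ (2*b)) = A ^ (-(2*b)) * B ^ (-(2*b)) := hLHS
        _ ≤ A ^ (-(2*b)) * (M/2) ^ (-(2*b)) := by
            apply mul_le_mul_of_nonneg_left h1 (rpow_nonneg hA0.le _)
        _ = (2/M) ^ (2*b) * A ^ (-(2*b)) := by rw [hhalf]; ring
        _ ≤ g τ := by
            simp only [hgdef]
            apply mul_le_mul_of_nonneg_left _ (rpow_nonneg (by positivity) _)
            have := rpow_nonneg hB0.le (-(2*b))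
            linarith
    · have hAM : M / 2 ≤ A := by linarith
      have h1 : A ^ (-(2*b)) ≤ (M/2) ^ (-(2*b)) :=
        Real.rpow_le_rpow_of_nonpos (by positivity) hAM (by linarith)
      calc 1 / (A ^ (2*b) * B ^ (2*b)) = A ^ (-(2*b)) * B ^ (-(2*b)) := hLHS
        _ ≤ (M/2) ^ (-(2*b)) * B ^ (-(2*b)) := by
            apply mul_le_mul_of_nonneg_right h1 (rpow_nonneg hB0.le _)
        _ = (2/M) ^ (2*b) * B ^ (-(2*b)) := by rw [hhalf]
        _ ≤ g τ := by
            simp only [hgdef]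
            apply mul_le_mul_of_nonneg_left _ (rpow_nonneg (by positivity) _)
            have := rpow_nonneg hA0.le (-(2*b))
            linarith
  -- monotonicity of integral
  have hmono : ∫ τ : ℝ, 1 / ((k1 + |τ - k2|) ^ (2*b) * (k3 + |τ - k4|) ^ (2*b)) ≤ ∫ τ, g τ := by
    apply integral_mono_of_nonneg
    · filter_upwards with τ
      have h1 : (0:ℝ) < k1 + |τ - k2| := by have := abs_nonneg (τ - k2); linarith
      have h2 : (0:ℝ) < k3 + |τ - k4| := by have := abs_nonneg (τ - k4); linarith
      positivity
    · exact hgint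
    · filter_upwards with τ using hptwise τ
  -- compute ∫ g
  have hval2 : ∫ τ : ℝ, (k1 + |τ - k2|) ^ (-(2*b)) = 2 * (k1 ^ (1 - 2*b) / (2*b - 1)) := by
    rw [integral_sub_right_eq_self (fun τ : ℝ => (k1 + |τ|) ^ (-(2*b))) k2]
    exact val_aux b k1 hb1 hb2 hk1
  have hval4 : ∫ τ : ℝ, (k3 + |τ - k4|) ^ (-(2*b)) = 2 * (k3 ^ (1 - 2*b) / (2*b - 1)) := by
    rw [integral_sub_right_eq_self (fun τ : ℝ => (k3 + |τ|) ^ (-(2*b))) k4]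
    exact val_aux b k3 hb1 hb2 hk3
  have hk31 : k3 ^ (1 - 2*b) ≤ k1 ^ (1 - 2*b) :=
    Real.rpow_le_rpow_of_nonpos (by linarith) hk13 (by linarith)
  have hgval : ∫ τ, g τ ≤ (2/M) ^ (2*b) * (4 * (k1 ^ (1 - 2*b) / (2*b - 1))) := by
    simp only [hgdef]
    rw [integral_const_mul, integral_add hint2 hint4, hval2, hval4]
    apply mul_le_mul_of_nonneg_left _ (rpow_nonneg (by positivity) _)
    have h1 : k3 ^ (1-2*b) / (2*b-1) ≤ k1 ^ (1-2*b) / (2*b-1) := by gcongr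
    linarith
  -- final algebra
  have hfinal : (2/M) ^ (2*b) * (4 * (k1 ^ (1 - 2*b) / (2*b - 1)))
      = (2:ℝ) ^ (2*b) * (4 / (2*b - 1)) / (k1 ^ (2*b - 1) * M ^ (2*b)) := by
    have hk10 : (0:ℝ) < k1 := by linarith
    rw [Real.div_rpow (by norm_num) hM0.le]
    rw [show (1 - 2*b) = -(2*b - 1) by ring, Real.rpow_neg hk10.le]
    have hMp : (0:ℝ) < M ^ (2*b) := rpow_pos_of_pos hM0 _
    have hkp : (0:ℝ) < k1 ^ (2*b - 1) := rpow_pos_of_pos hk10 _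
    field_simp
  calc ∫ τ : ℝ, 1 / ((k1 + |τ - k2|) ^ (2*b) * (k3 + |τ - k4|) ^ (2*b))
      ≤ ∫ τ, g τ := hmono
    _ ≤ (2/M) ^ (2*b) * (4 * (k1 ^ (1 - 2*b) / (2*b - 1))) := hgval
    _ = (2:ℝ) ^ (2*b) * (4 / (2*b - 1)) / (k1 ^ (2*b - 1) * M ^ (2*b)) := hfinal
end

section
/- Let $1/2 < b < 1$, $b' < 1$, $b + b' > 1$, and let $k_2, k_4 \in \mathbb{R}$, $k_3 > 0$. Then for all $\tau \in \mathbb{R}$, $\frac{1}{(k_3 + |\tau - k_2|)^{2(1-b')} (k_3 + |\tau - k_4|)^{2b}} \leq \frac{1}{k_3^{2b} (k_3 + |k_2 - k_4|)^{2(1-b')}}$. -/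
open Real

theorem stmt_1 (b b' : ℝ) (hb1 : 1/2 < b) (hb2 : b < 1) (hb' : b' < 1)
    (hbb' : 1 < b + b') (k2 k3 k4 : ℝ) (hk3 : 0 < k3) :
    ∀ τ : ℝ,
      1 / ((k3 + |τ - k2|) ^ (2*(1 - b')) * (k3 + |τ - k4|) ^ (2*b)) ≤
        1 / (k3 ^ (2*b) * (k3 + |k2 - k4|) ^ (2*(1 - b'))) := by
  intro τ
  set A := k3 + |τ - k2| with hAdef
  set B := k3 + |τ - k4| with hBdef
  have hA : 0 < A := by positivity
  have hB : 0 < B := by positivity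
  have hk3B : k3 ≤ B := by simp [hBdef, abs_nonneg]
  have hC : 0 < k3 + |k2 - k4| := by positivity
  have htri : |k2 - k4| ≤ |τ - k2| + |τ - k4| := by
    calc |k2 - k4| = |(k2 - τ) + (τ - k4)| := by ring_nf
      _ ≤ |k2 - τ| + |τ - k4| := abs_add_le _ _
      _ = |τ - k2| + |τ - k4| := by rw [abs_sub_comm k2 τ]
  have hprod : k3 * (k3 + |k2 - k4|) ≤ A * B := by
    have h1 : 0 ≤ |τ - k2| := abs_nonneg _
    have h2 : 0 ≤ |τ - k4| := abs_nonneg _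
    nlinarith [mul_nonneg h1 h2]
  have he1 : 0 ≤ 2 * (1 - b') := by linarith
  have he2 : 0 ≤ 2 * (b + b' - 1) := by linarith
  have key : k3 ^ (2*b) * (k3 + |k2 - k4|) ^ (2*(1 - b')) ≤
      A ^ (2*(1 - b')) * B ^ (2*b) := by
    have hsplitk : k3 ^ (2*b) = k3 ^ (2*(1-b')) * k3 ^ (2*(b+b'-1)) := by
      rw [← Real.rpow_add hk3]; ring_nf
    have hsplitB : B ^ (2*b) = B ^ (2*(1-b')) * B ^ (2*(b+b'-1)) := by
      rw [← Real.rpow_add hB]; ring_nf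
    rw [hsplitk, hsplitB]
    have h1 : k3 ^ (2*(1-b')) * (k3 + |k2 - k4|) ^ (2*(1-b')) ≤
        A ^ (2*(1-b')) * B ^ (2*(1-b')) := by
      rw [← Real.mul_rpow hk3.le hC.le, ← Real.mul_rpow hA.le hB.le]
      exact Real.rpow_le_rpow (by positivity) hprod he1
    have h2 : k3 ^ (2*(b+b'-1)) ≤ B ^ (2*(b+b'-1)) :=
      Real.rpow_le_rpow hk3.le hk3B he2
    calc k3 ^ (2*(1-b')) * k3 ^ (2*(b+b'-1)) * (k3 + |k2 - k4|) ^ (2*(1-b'))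
        = k3 ^ (2*(1-b')) * (k3 + |k2 - k4|) ^ (2*(1-b')) * k3 ^ (2*(b+b'-1)) := by ring
      _ ≤ (A ^ (2*(1-b')) * B ^ (2*(1-b'))) * B ^ (2*(b+b'-1)) := by
          apply mul_le_mul h1 h2 (by positivity) (by positivity)
      _ = A ^ (2*(1-b')) * (B ^ (2*(1-b')) * B ^ (2*(b+b'-1))) := by ring
  apply one_div_le_one_div_of_le (by positivity) key
end

section
/- Let $1/2 < b < 1$, $b' < 1$, $b + b' > 1$, and let $k_2, k_4 \in \mathbb{R}$, $k_3 > 0$. Then for all $\tau \in \mathbb{R}$, $\frac{1}{(k_3 + |\tau - k_2|)^{2b} (k_3 + |\tau - k_4|)^{2(1-b')}} \leq \frac{1}{k_3^{2b} (k_3 + |k_2 - k_4|)^{2(1-b')}}$. -/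
open Real

theorem stmt_2 (b b' : ℝ) (hb1 : 1/2 < b) (hb2 : b < 1) (hb' : b' < 1)
    (hbb' : 1 < b + b') (k2 k3 k4 : ℝ) (hk3 : 0 < k3) :
    ∀ τ : ℝ,
      1 / ((k3 + |τ - k2|) ^ (2*b) * (k3 + |τ - k4|) ^ (2*(1 - b'))) ≤
        1 / (k3 ^ (2*b) * (k3 + |k2 - k4|) ^ (2*(1 - b'))) := by
  intro τ
  set A := k3 + |τ - k2| with hAdef
  set B := k3 + |τ - k4| with hBdef
  set C := k3 + |k2 - k4| with hCdef
  have hA0 : 0 < A := by positivity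
  have hB0 : 0 < B := by positivity
  have hC0 : 0 < C := by positivity
  have hkA : k3 ≤ A := le_add_of_nonneg_right (abs_nonneg _)
  have hkB : k3 ≤ B := le_add_of_nonneg_right (abs_nonneg _)
  have htri : |k2 - k4| ≤ |τ - k2| + |τ - k4| := by
    have := abs_sub_abs_le_abs_sub (τ - k4) (τ - k2)
    calc |k2 - k4| = |(τ - k4) - (τ - k2)| := by ring_nf
    _ ≤ |τ - k4| + |τ - k2| := abs_sub _ _
    _ = |τ - k2| + |τ - k4| := by ring
  have hCAB : C ≤ A * B / k3 := by
    rw [le_div_iff₀ hk3]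
    nlinarith [abs_nonneg (τ - k2), abs_nonneg (τ - k4), abs_nonneg (k2 - k4)]
  have he : (0:ℝ) ≤ 2 * (1 - b') := by linarith
  have he2 : (0:ℝ) ≤ 2*b - 2*(1 - b') := by linarith
  have key : k3 ^ (2*b) * C ^ (2*(1 - b')) ≤ A ^ (2*b) * B ^ (2*(1 - b')) := by
    calc k3 ^ (2*b) * C ^ (2*(1 - b'))
        ≤ k3 ^ (2*b) * (A * B / k3) ^ (2*(1 - b')) := by
          apply mul_le_mul_of_nonneg_left _ (rpow_nonneg hk3.le _)
          exact rpow_le_rpow hC0.le hCAB he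
      _ = k3 ^ (2*b - 2*(1 - b')) * ((A*B) ^ (2*(1 - b'))) := by
          rw [div_rpow (by positivity) hk3.le, rpow_sub hk3]
          field_simp
      _ ≤ A ^ (2*b - 2*(1 - b')) * ((A*B) ^ (2*(1 - b'))) := by
          apply mul_le_mul_of_nonneg_right (rpow_le_rpow hk3.le hkA he2)
          positivity
      _ = A ^ (2*b - 2*(1 - b')) * (A ^ (2*(1 - b')) * B ^ (2*(1 - b'))) := by
          rw [mul_rpow hA0.le hB0.le]
      _ = A ^ (2*b) * B ^ (2*(1 - b')) := by
          rw [← mul_assoc, ← rpow_add hA0]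
          ring_nf
  exact one_div_le_one_div_of_le (by positivity) key
end

section
/- For any real numbers $\xi \neq 0$ and $\tau$, and any $b > 1/2$, there is a constant $C$ depending only on $b$ such that $\int_{\mathbb{R}} \frac{d\xi_1}{(1 + |\tau - \xi_1^3 - (\xi - \xi_1)^3|)^{2b}} \leq \frac{C}{\sqrt{|\xi|} (1 + |4\tau - \xi^3|)^{1/2}}$. -/
/-!
Shifting `ξ₁ = t + ξ/2` turns the resonance function into `l - 3ξt²` with `4l = 4τ - ξ³`,
and rescaling `t` by `√(3|ξ|)` reduces the claim to
`∫ (1 + |l - t²|)^(-p) dt ≲ (1 + |l|)^(-1/2)` for `p > 1`.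
Writing `l - t² = (√l - |t|)(√l + |t|)` when `l ≥ 0`, the factor `√l + |t|` is comparable
to `√(1 + |l|)` wherever the integrand is not already small, so the integrand is dominated by two
translates of `(1 + √(1 + |l|) |t|)^(-p)`, each of integral `≍ (1 + |l|)^(-1/2)`.
-/

open MeasureTheory Real

lemma integrable_one_add_abs_rpow_neg {p : ℝ} (hp : 1 < p) :
    Integrable fun u : ℝ => (1 + |u|) ^ (-p) := by
  simpa [Real.norm_eq_abs] using
    integrable_one_add_norm (E := ℝ) (μ := volume) (r := p) (by simpa)

lemma integral_one_add_abs_rpow_neg_pos {p : ℝ} (hp : 1 < p) :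
    0 < ∫ u : ℝ, (1 + |u|) ^ (-p) := by
  refine (integral_pos_iff_support_of_nonneg (fun u => by positivity)
    (integrable_one_add_abs_rpow_neg hp)).2 ?_
  have hsupp : Function.support (fun u : ℝ => (1 + |u|) ^ (-p)) = Set.univ :=
    Function.support_eq_univ fun u => by positivity
  simp [hsupp]

lemma integrable_one_add_mul_abs_sub_rpow_neg {p σ : ℝ} (hp : 1 < p) (hσ : 0 < σ) (c : ℝ) :
    Integrable fun t : ℝ => (1 + σ * |t - c|) ^ (-p) := by
  have h := ((integrable_one_add_abs_rpow_neg hp).comp_mul_left' hσ.ne').comp_sub_right c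
  simpa [abs_mul, abs_of_pos hσ] using h

lemma integral_one_add_mul_abs_sub_rpow_neg {p σ : ℝ} (hσ : 0 < σ) (c : ℝ) :
    ∫ t : ℝ, (1 + σ * |t - c|) ^ (-p) = σ⁻¹ * ∫ u : ℝ, (1 + |u|) ^ (-p) := by
  have h := Measure.integral_comp_mul_left (fun u : ℝ => (1 + |u|) ^ (-p)) σ
  rw [abs_of_pos (inv_pos.2 hσ), smul_eq_mul] at h
  rw [← h]
  simpa [abs_mul, abs_of_pos hσ] using
    integral_sub_right_eq_self (fun x => (1 + |σ * x|) ^ (-p)) c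

/-- For `l ≤ 0` we have `√l = 0`, and the bound is AM-GM `2√(1 + |l|) t ≤ 1 + |l| + t²`. -/
lemma one_add_sqrt_mul_abs_sub_sqrt_le {l t : ℝ} (ht : 0 ≤ t) :
    1 + √(1 + |l|) * |t - √l| ≤ 2 * (1 + |l - t ^ 2|) := by
  set σ := √(1 + |l|)
  have hσ : σ ^ 2 = 1 + |l| := sq_sqrt (by positivity)
  have hσ0 : 0 ≤ σ := sqrt_nonneg _
  rcases le_total l 0 with hl | hl
  · rw [abs_of_nonpos hl] at hσ
    rw [sqrt_eq_zero'.2 hl, sub_zero, abs_of_nonneg ht,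
      abs_of_nonpos (show l - t ^ 2 ≤ 0 by nlinarith)]
    nlinarith [sq_nonneg (σ - t)]
  · set s := √l
    have hs : s ^ 2 = l := sq_sqrt hl
    have hs0 : 0 ≤ s := sqrt_nonneg _
    have hσs : σ ≤ 1 + s := by
      rw [abs_of_nonneg hl] at hσ
      nlinarith
    have hfac : |l - t ^ 2| = |t - s| * (t + s) := by
      rw [← hs, show s ^ 2 - t ^ 2 = -((t - s) * (t + s)) by ring, abs_neg, abs_mul,
        abs_of_nonneg (by linarith : 0 ≤ t + s)]
    rw [hfac]
    have hx0 : 0 ≤ |t - s| := abs_nonneg _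
    have hxle : |t - s| ≤ t + s := abs_le.2 ⟨by linarith, by linarith⟩
    have hx : |t - s| ≤ 1 + |t - s| * (t + s) := by
      rcases le_total (|t - s|) 1 with h1 | h1 <;> nlinarith
    nlinarith [mul_le_mul_of_nonneg_right hσs hx0]

lemma one_add_abs_sub_sq_rpow_neg_le {p : ℝ} (hp : 0 ≤ p) (l t : ℝ) :
    (1 + |l - t ^ 2|) ^ (-p) ≤
      2 ^ p * ((1 + √(1 + |l|) * |t - √l|) ^ (-p) +
        (1 + √(1 + |l|) * |t + √l|) ^ (-p)) := by
  have of_nonneg : ∀ u : ℝ, 0 ≤ u →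
      (1 + |l - u ^ 2|) ^ (-p) ≤ 2 ^ p * (1 + √(1 + |l|) * |u - √l|) ^ (-p) := by
    intro u hu
    calc (1 + |l - u ^ 2|) ^ (-p)
        ≤ ((1 + √(1 + |l|) * |u - √l|) / 2) ^ (-p) :=
          rpow_le_rpow_of_nonpos (by positivity)
            (by linarith [one_add_sqrt_mul_abs_sub_sqrt_le (l := l) hu]) (by linarith)
      _ = 2 ^ p * (1 + √(1 + |l|) * |u - √l|) ^ (-p) := by
          rw [div_rpow (by positivity) zero_le_two, rpow_neg zero_le_two, div_eq_mul_inv, inv_inv,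
            mul_comm]
  have h₁ : 0 ≤ 2 ^ p * (1 + √(1 + |l|) * |t - √l|) ^ (-p) := by positivity
  have h₂ : 0 ≤ 2 ^ p * (1 + √(1 + |l|) * |t + √l|) ^ (-p) := by positivity
  rcases le_total 0 t with ht | ht
  · linarith [of_nonneg t ht]
  · have := of_nonneg (-t) (by linarith)
    rw [neg_sq, show -t - √l = -(t + √l) by ring, abs_neg] at this
    linarith

lemma integral_one_add_abs_sub_sq_rpow_neg_le {p : ℝ} (hp : 1 < p) (l : ℝ) :
    ∫ t : ℝ, (1 + |l - t ^ 2|) ^ (-p) ≤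
      2 ^ (p + 1) * (∫ u : ℝ, (1 + |u|) ^ (-p)) / √(1 + |l|) := by
  have hσ : 0 < √(1 + |l|) := sqrt_pos.2 (by positivity)
  have hint (c : ℝ) := integrable_one_add_mul_abs_sub_rpow_neg hp hσ c
  calc ∫ t : ℝ, (1 + |l - t ^ 2|) ^ (-p)
      ≤ ∫ t : ℝ, 2 ^ p * ((1 + √(1 + |l|) * |t - √l|) ^ (-p) +
          (1 + √(1 + |l|) * |t - -√l|) ^ (-p)) := by
        refine integral_mono_of_nonneg (.of_forall fun t => by positivity)
          (((hint _).add (hint _)).const_mul _) (.of_forall fun t => ?_)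
        simpa using one_add_abs_sub_sq_rpow_neg_le (by linarith) l t
    _ = 2 ^ (p + 1) * (∫ u : ℝ, (1 + |u|) ^ (-p)) / √(1 + |l|) := by
        rw [integral_const_mul, integral_add (hint _) (hint _),
          integral_one_add_mul_abs_sub_rpow_neg hσ, integral_one_add_mul_abs_sub_rpow_neg hσ,
          rpow_add zero_lt_two, rpow_one]
        ring

lemma integral_comp_mul_sq {E : Type*} [NormedAddCommGroup E] [NormedSpace ℝ E] (g : ℝ → E)
    {a : ℝ} (ha : 0 < a) :
    ∫ t : ℝ, g (a * t ^ 2) = (√a)⁻¹ • ∫ t : ℝ, g (t ^ 2) := by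
  have h := Measure.integral_comp_mul_left (fun t : ℝ => g (t ^ 2)) √a
  rw [abs_of_pos (inv_pos.2 (sqrt_pos.2 ha))] at h
  simpa [mul_pow, sq_sqrt ha.le] using h

lemma integral_one_add_abs_sub_mul_sq_rpow_neg_le {p : ℝ} (hp : 1 < p) (l : ℝ) {a : ℝ}
    (ha : a ≠ 0) :
    ∫ t : ℝ, (1 + |l - a * t ^ 2|) ^ (-p) ≤
      2 ^ (p + 1) * (∫ u : ℝ, (1 + |u|) ^ (-p)) / (√|a| * √(1 + |l|)) := by
  wlog ha' : 0 < a generalizing l a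
  · have h := this (-l) (neg_ne_zero.2 ha) (by linarith [ha.lt_or_gt.resolve_right ha'])
    simp_rw [abs_neg, show ∀ t : ℝ, -l - -a * t ^ 2 = -(l - a * t ^ 2) by intro t; ring,
      abs_neg] at h
    exact h
  rw [integral_comp_mul_sq (fun u => (1 + |l - u|) ^ (-p)) ha', smul_eq_mul, abs_of_pos ha',
    mul_comm √a, ← div_div, div_eq_inv_mul _ √a]
  exact mul_le_mul_of_nonneg_left (integral_one_add_abs_sub_sq_rpow_neg_le hp l) (by positivity)

theorem stmt_4 (b : ℝ) (hb : 1/2 < b) :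
    ∃ C > 0, ∀ (ξ τ : ℝ), ξ ≠ 0 →
      ∫ ξ1 : ℝ, 1 / (1 + |τ - ξ1^3 - (ξ - ξ1)^3|) ^ (2*b) ≤
        C / (Real.sqrt |ξ| * (1 + |4*τ - ξ^3|) ^ ((1:ℝ)/2)) := by
  have hp : 1 < 2 * b := by linarith
  set M := ∫ u : ℝ, (1 + |u|) ^ (-(2 * b))
  have hM : 0 < M := integral_one_add_abs_rpow_neg_pos hp
  refine ⟨2 ^ (2 * b + 2) * M, by positivity, fun ξ τ hξ => ?_⟩
  set l := τ - ξ ^ 3 / 4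
  have hshift : ∫ ξ1 : ℝ, 1 / (1 + |τ - ξ1^3 - (ξ - ξ1)^3|) ^ (2*b) =
      ∫ t : ℝ, (1 + |l - 3 * ξ * t ^ 2|) ^ (-(2 * b)) := by
    rw [← integral_add_right_eq_self _ (ξ / 2)]
    congr 1 with t
    rw [rpow_neg (by positivity), one_div, show τ - (t + ξ / 2) ^ 3 - (ξ - (t + ξ / 2)) ^ 3 =
      l - 3 * ξ * t ^ 2 by simp only [l]; ring]
  have hdenom :
      √|ξ| * (1 + |4 * τ - ξ ^ 3|) ^ ((1:ℝ)/2) ≤ 2 * (√|3 * ξ| * √(1 + |l|)) := by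
    rw [← sqrt_eq_rpow, show 4 * τ - ξ ^ 3 = 4 * l by simp only [l]; ring, abs_mul 4, abs_mul 3,
      abs_of_pos (four_pos : (0:ℝ) < 4), abs_of_pos (three_pos : (0:ℝ) < 3),
      ← sqrt_mul (by positivity), ← sqrt_mul (by positivity), show (2:ℝ) = √4 by norm_num,
      ← sqrt_mul (by positivity)]
    exact sqrt_le_sqrt (by nlinarith [abs_nonneg ξ, abs_nonneg l])
  rw [hshift]
  calc ∫ t : ℝ, (1 + |l - 3 * ξ * t ^ 2|) ^ (-(2 * b))
      ≤ 2 ^ (2 * b + 1) * M / (√|3 * ξ| * √(1 + |l|)) :=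
        integral_one_add_abs_sub_mul_sq_rpow_neg_le hp l (mul_ne_zero three_ne_zero hξ)
    _ ≤ 2 ^ (2 * b + 1) * M / ((√|ξ| * (1 + |4 * τ - ξ ^ 3|) ^ ((1:ℝ)/2)) / 2) := by
        gcongr
        linarith
    _ = 2 ^ (2 * b + 2) * M / (√|ξ| * (1 + |4 * τ - ξ ^ 3|) ^ ((1:ℝ)/2)) := by
        rw [div_div_eq_mul_div, show (2:ℝ) ^ (2 * b + 2) = 2 ^ (2 * b + 1) * 2 by
          rw [← rpow_add_one two_ne_zero]; ring_nf]
        ring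
end

section
/- Fix $s > 1$, $n \in \mathbb{Z} \setminus \{0\}$, $m \in \mathbb{Z}$, and define $\rho_{m,n} = (|n| + |m|)^{2s}$. Then there is a constant $C$ depending only on $s$ (independent of $m, n$) such that $\sum_{(m',n')} \frac{\rho_{m,n}}{\rho_{m',n'} \, \rho_{m-m', n-n'}} \leq C$, where the sum is over all $(m',n') \in \mathbb{Z}^2$ with $n' \neq 0$, $n' \neq n$, and $n'/n \geq 1/2$. -/
open Real

private lemma rpow_add_le' {t : ℝ} (ht : 0 ≤ t) {A B : ℝ} (hA : 0 ≤ A) (hB : 0 ≤ B) :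
    (A + B) ^ t ≤ 2 ^ t * (A ^ t + B ^ t) := by
  have hmax : 0 ≤ max A B := le_max_of_le_left hA
  have h1 : (A + B) ^ t ≤ (2 * max A B) ^ t := by
    apply Real.rpow_le_rpow (by linarith) _ ht
    rcases max_cases A B with ⟨h, h'⟩ | ⟨h, h'⟩ <;> rw [h] <;> linarith
  have h2 : (2 * max A B) ^ t = 2 ^ t * (max A B) ^ t :=
    Real.mul_rpow (by norm_num) hmax
  have h3 : (max A B) ^ t ≤ A ^ t + B ^ t := by
    rcases max_cases A B with ⟨h, h'⟩ | ⟨h, h'⟩ <;> rw [h]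
    · nlinarith [Real.rpow_nonneg hB t]
    · nlinarith [Real.rpow_nonneg hA t]
  have h4 : (0:ℝ) ≤ 2 ^ t := Real.rpow_nonneg (by norm_num) t
  calc (A+B)^t ≤ (2*max A B)^t := h1
    _ = 2^t * (max A B)^t := h2
    _ ≤ 2^t * (A^t + B^t) := by nlinarith

private lemma gsummable {s : ℝ} (hs : 1 < s) :
    Summable (fun a : ℤ => ((1 + |(a : ℝ)|) ^ s)⁻¹) := by
  have hbase : Summable (fun a : ℤ => 1 / |(a:ℝ)| ^ s) :=
    ((Real.summable_one_div_int_add_rpow 0 s).2 hs).congr (fun a => by norm_num)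
  have hbig : Summable (fun a : ℤ => 1 / |(a:ℝ)| ^ s + if a = 0 then (1:ℝ) else 0) :=
    hbase.add (hasSum_ite_eq 0 1).summable
  refine hbig.of_nonneg_of_le (fun a => by positivity) (fun a => ?_)
  rcases eq_or_ne a 0 with rfl | ha
  · simp [Real.zero_rpow (show s ≠ 0 by linarith)]
  · have h1 : (1:ℝ) ≤ |(a:ℝ)| := by
      rw [← Int.cast_abs]; exact_mod_cast Int.one_le_abs ha
    have h2 : |(a:ℝ)| ^ s ≤ (1 + |(a:ℝ)|) ^ s :=
      Real.rpow_le_rpow (abs_nonneg _) (by linarith) (by linarith)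
    have h3 : (0:ℝ) < |(a:ℝ)| ^ s := Real.rpow_pos_of_pos (by linarith) s
    have h5 : ((1 + |(a:ℝ)|) ^ s)⁻¹ ≤ (|(a:ℝ)| ^ s)⁻¹ := inv_anti₀ h3 h2
    simp only [ha, if_neg]
    rw [one_div]
    simpa using h5

private lemma fsummable {s : ℝ} (hs : 1 < s) :
    Summable (fun p : ℤ × ℤ => ((|(p.2:ℝ)| + |(p.1:ℝ)|) ^ (2*s))⁻¹) := by
  have hg := gsummable hs
  have hgn : 0 ≤ fun a : ℤ => ((1 + |(a : ℝ)|) ^ s)⁻¹ := fun a => by positivity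
  have hsum : Summable (fun p : ℤ × ℤ =>
      (4:ℝ)^s * (((1 + |(p.1:ℝ)|)^s)⁻¹ * ((1 + |(p.2:ℝ)|)^s)⁻¹)) :=
    (hg.mul_of_nonneg hg hgn hgn).mul_left _
  refine hsum.of_nonneg_of_le (fun p => by positivity) (fun p => ?_)
  rcases eq_or_ne p (0, 0) with rfl | hp
  · simp only [Prod.fst, Prod.snd, Int.cast_zero, abs_zero, add_zero,
      Real.zero_rpow (show 2*s ≠ 0 by nlinarith), inv_zero]
    positivity
  · set x := |(p.1:ℝ)| with hx
    set y := |(p.2:ℝ)| with hy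
    have hx0 : 0 ≤ x := abs_nonneg _
    have hy0 : 0 ≤ y := abs_nonneg _
    have hxy : 1 ≤ x + y := by
      have hp' : p.1 ≠ 0 ∨ p.2 ≠ 0 := by
        by_contra hc; push_neg at hc; exact hp (Prod.ext hc.1 hc.2)
      rcases hp' with h | h
      · have h1 : (1:ℝ) ≤ x := by
          rw [hx, ← Int.cast_abs]; exact_mod_cast Int.one_le_abs h
        linarith
      · have h1 : (1:ℝ) ≤ y := by
          rw [hy, ← Int.cast_abs]; exact_mod_cast Int.one_le_abs h
        linarith
    have hbase : (1+x)*(1+y) ≤ 4 * (x+y)^2 := by nlinarith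
    have key : ((1+x)*(1+y))^s ≤ 4^s * (y+x)^(2*s) := by
      have h1 : ((1+x)*(1+y))^s ≤ (4*(x+y)^2)^s :=
        Real.rpow_le_rpow (by positivity) hbase (by linarith)
      have h2 : (4*(x+y)^2)^s = 4^s * ((x+y)^2)^s :=
        Real.mul_rpow (by norm_num) (by positivity)
      have h3 : ((x+y)^2)^s = (x+y)^(2*s) := by
        rw [← Real.rpow_natCast (x+y) 2, ← Real.rpow_mul (by linarith)]
        norm_num
      rw [show y + x = x + y from add_comm y x]
      calc ((1+x)*(1+y))^s ≤ (4*(x+y)^2)^s := h1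
        _ = 4^s * (x+y)^(2*s) := by rw [h2, h3]
    have hApos : (0:ℝ) < ((1+x)*(1+y))^s := Real.rpow_pos_of_pos (by nlinarith) s
    have hBpos : (0:ℝ) < (y+x)^(2*s) := Real.rpow_pos_of_pos (by linarith) _
    have h4 : (1+x)^s * (1+y)^s = ((1+x)*(1+y))^s :=
      (Real.mul_rpow (by linarith) (by linarith)).symm
    have goal' : ((y+x)^(2*s))⁻¹ ≤ 4^s / ((1+x)*(1+y))^s := by
      rw [inv_eq_one_div, div_le_div_iff₀ hBpos hApos]
      nlinarith [key]
    calc ((y+x)^(2*s))⁻¹ ≤ 4^s / ((1+x)*(1+y))^s := goal'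
      _ = 4^s * (((1+x)^s)⁻¹ * ((1+y)^s)⁻¹) := by
          rw [div_eq_mul_inv, ← h4, mul_inv]

theorem stmt_5 (s : ℝ) (hs : 1 < s) :
    ∃ C > 0, ∀ (n : ℤ) (m : ℤ), n ≠ 0 →
      ∑' p : ℤ × ℤ,
        (if p.2 ≠ 0 ∧ p.2 ≠ n ∧ (1:ℝ)/2 ≤ (p.2 : ℝ) / (n : ℝ) then
          (|(n:ℝ)| + |(m:ℝ)|) ^ (2*s) /
            ((|(p.2:ℝ)| + |(p.1:ℝ)|) ^ (2*s) *
             (|(n:ℝ) - p.2| + |(m:ℝ) - p.1|) ^ (2*s))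
        else 0) ≤ C := by
  have hf := fsummable hs
  set f : ℤ × ℤ → ℝ := fun p => ((|(p.2:ℝ)| + |(p.1:ℝ)|) ^ (2*s))⁻¹ with hfdef
  set S := ∑' p, f p with hSdef
  have hS : 0 ≤ S := tsum_nonneg (fun p => by positivity)
  have h2t : (0:ℝ) < 2 ^ (2*s) := Real.rpow_pos_of_pos two_pos _
  refine ⟨2^(2*s) * (S + S) + 1, by nlinarith, fun n m hn => ?_⟩
  have hinv : Function.Involutive (fun p : ℤ × ℤ => ((m - p.1 : ℤ), (n - p.2 : ℤ))) := by
    intro p; simp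
  set e := hinv.toPerm _ with he
  have hf2 : Summable (fun p : ℤ × ℤ => f (m - p.1, n - p.2)) :=
    (e.summable_iff (f := f)).2 hf
  have hcast : ∀ p : ℤ × ℤ,
      ((|(n:ℝ) - (p.2:ℝ)| + |(m:ℝ) - (p.1:ℝ)|) ^ (2*s))⁻¹ = f (m - p.1, n - p.2) := by
    intro p
    simp only [hfdef]
    norm_cast
  have hf2' : Summable (fun p : ℤ × ℤ =>
      ((|(n:ℝ) - (p.2:ℝ)| + |(m:ℝ) - (p.1:ℝ)|) ^ (2*s))⁻¹) :=
    hf2.congr (fun p => (hcast p).symm)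
  have hteq : ∑' p : ℤ × ℤ, ((|(n:ℝ) - (p.2:ℝ)| + |(m:ℝ) - (p.1:ℝ)|) ^ (2*s))⁻¹ = S := by
    rw [tsum_congr hcast]
    exact e.tsum_eq f
  set h : ℤ × ℤ → ℝ := fun p =>
    2^(2*s) * (((|(n:ℝ) - (p.2:ℝ)| + |(m:ℝ) - (p.1:ℝ)|) ^ (2*s))⁻¹ + f p) with hhdef
  have hhs : Summable h := (hf2'.add hf).mul_left _
  have hhsum : ∑' p, h p = 2^(2*s) * (S + S) := by
    simp only [hhdef]
    rw [tsum_mul_left, Summable.tsum_add hf2' hf, hteq]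
  have hle : ∀ p : ℤ × ℤ,
      (if p.2 ≠ 0 ∧ p.2 ≠ n ∧ (1:ℝ)/2 ≤ (p.2 : ℝ) / (n : ℝ) then
          (|(n:ℝ)| + |(m:ℝ)|) ^ (2*s) /
            ((|(p.2:ℝ)| + |(p.1:ℝ)|) ^ (2*s) *
             (|(n:ℝ) - p.2| + |(m:ℝ) - p.1|) ^ (2*s))
        else 0) ≤ h p := by
    intro p
    by_cases hcond : p.2 ≠ 0 ∧ p.2 ≠ n ∧ (1:ℝ)/2 ≤ (p.2 : ℝ) / (n : ℝ)
    · rw [if_pos hcond]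
      obtain ⟨h1, h2, -⟩ := hcond
      have hA1 : 1 ≤ |(p.2:ℝ)| + |(p.1:ℝ)| := by
        have h' : (1:ℝ) ≤ |(p.2:ℝ)| := by
          rw [← Int.cast_abs]; exact_mod_cast Int.one_le_abs h1
        have := abs_nonneg (p.1:ℝ); linarith
      have hB1 : 1 ≤ |(n:ℝ) - (p.2:ℝ)| + |(m:ℝ) - (p.1:ℝ)| := by
        have hne : n - p.2 ≠ 0 := sub_ne_zero.2 (Ne.symm h2)
        have h' : (1:ℝ) ≤ |((n - p.2 : ℤ):ℝ)| := by
          rw [← Int.cast_abs]; exact_mod_cast Int.one_le_abs hne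
        push_cast at h'
        have := abs_nonneg ((m:ℝ) - (p.1:ℝ)); linarith
      set A := |(p.2:ℝ)| + |(p.1:ℝ)| with hA
      set B := |(n:ℝ) - (p.2:ℝ)| + |(m:ℝ) - (p.1:ℝ)| with hB
      have hNM : |(n:ℝ)| + |(m:ℝ)| ≤ A + B := by
        have h1' : |(n:ℝ)| ≤ |(p.2:ℝ)| + |(n:ℝ) - (p.2:ℝ)| := by
          have := abs_add_le (p.2:ℝ) ((n:ℝ) - (p.2:ℝ)); simpa using this
        have h2' : |(m:ℝ)| ≤ |(p.1:ℝ)| + |(m:ℝ) - (p.1:ℝ)| := by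
          have := abs_add_le (p.1:ℝ) ((m:ℝ) - (p.1:ℝ)); simpa using this
        rw [hA, hB]; linarith
      have hN : (|(n:ℝ)| + |(m:ℝ)|)^(2*s) ≤ 2^(2*s) * (A^(2*s) + B^(2*s)) := by
        calc (|(n:ℝ)| + |(m:ℝ)|)^(2*s) ≤ (A+B)^(2*s) :=
              Real.rpow_le_rpow (by positivity) hNM (by nlinarith)
          _ ≤ 2^(2*s) * (A^(2*s) + B^(2*s)) :=
              rpow_add_le' (by nlinarith) (by linarith) (by linarith)
      have hApos : (0:ℝ) < A^(2*s) := Real.rpow_pos_of_pos (by linarith) _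
      have hBpos : (0:ℝ) < B^(2*s) := Real.rpow_pos_of_pos (by linarith) _
      have hfp : f p = (A^(2*s))⁻¹ := rfl
      show (|(n:ℝ)| + |(m:ℝ)|)^(2*s) / (A^(2*s) * B^(2*s)) ≤
        2^(2*s) * ((B^(2*s))⁻¹ + f p)
      rw [hfp, div_le_iff₀ (by positivity)]
      have expand : 2^(2*s) * ((B^(2*s))⁻¹ + (A^(2*s))⁻¹) * (A^(2*s) * B^(2*s)) =
          2^(2*s) * (A^(2*s) + B^(2*s)) := by
        field_simp
      rw [expand]
      exact hN
    · rw [if_neg hcond]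
      simp only [hhdef, hfdef]
      positivity
  have hnn : ∀ p : ℤ × ℤ,
      0 ≤ (if p.2 ≠ 0 ∧ p.2 ≠ n ∧ (1:ℝ)/2 ≤ (p.2 : ℝ) / (n : ℝ) then
          (|(n:ℝ)| + |(m:ℝ)|) ^ (2*s) /
            ((|(p.2:ℝ)| + |(p.1:ℝ)|) ^ (2*s) *
             (|(n:ℝ) - p.2| + |(m:ℝ) - p.1|) ^ (2*s))
        else 0) := by
    intro p
    split
    · positivity
    · exact le_refl 0
  refine le_trans (Summable.tsum_le_tsum hle (Summable.of_nonneg_of_le hnn hle hhs) hhs) ?_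
  rw [hhsum]
  linarith
end

section
/- Let $u$ be a smooth solution on $[0,T]$ of $u_{yyt} - \gamma u_{xxx} - \alpha u_{yyyy} - \beta u_{yy} + (u^2)_{xyy} = 0$ on $(x,y) \in [0,2\pi] \times [0,\pi]$, $2\pi$-periodic in $x$, with boundary conditions $u_y = u_{yyy} = 0$ at $y = 0, \pi$ and with $\int_0^\pi u(x,y,t)\,dy = 0$ for all $x, t$. Then for all $t \in [0,T]$: $\frac{1}{2}\|u(\cdot,\cdot,t)\|_{L^2}^2 + \alpha \int_0^t \|u_y(\cdot,\cdot,s)\|_{L^2}^2\,ds = \frac{1}{2}\|u(\cdot,\cdot,0)\|_{L^2}^2 + \beta \int_0^t \|u(\cdot,\cdot,s)\|_{L^2}^2\,ds$. -/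
open MeasureTheory Real intervalIntegral

noncomputable section HallAux

def Pd (v : ℝ × ℝ × ℝ) (G : ℝ × ℝ × ℝ → ℝ) (p : ℝ × ℝ × ℝ) : ℝ := fderiv ℝ G p v

def eX : ℝ × ℝ × ℝ := (1,0,0)
def eY : ℝ × ℝ × ℝ := (0,1,0)
def eT : ℝ × ℝ × ℝ := (0,0,1)

def SmU (T : ℝ) (G : ℝ × ℝ × ℝ → ℝ) : Prop :=
  ∀ p : ℝ × ℝ × ℝ, p.2.2 ∈ Set.Ioo 0 T → ContDiffAt ℝ (⊤ : ℕ∞) G p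

def F3 (u : ℝ → ℝ → ℝ → ℝ) : ℝ × ℝ × ℝ → ℝ := fun p => u p.1 p.2.1 p.2.2

theorem SmU.pd {T : ℝ} {G : ℝ × ℝ × ℝ → ℝ} (h : SmU T G) (v : ℝ × ℝ × ℝ) :
    SmU T (Pd v G) := by
  intro p hp
  exact ((h p hp).fderiv_right (by exact (by simp))).clm_apply contDiffAt_const

theorem SmU.diffAt {T : ℝ} {G : ℝ × ℝ × ℝ → ℝ} (h : SmU T G) {p : ℝ × ℝ × ℝ}
    (hp : p.2.2 ∈ Set.Ioo 0 T) : DifferentiableAt ℝ G p := (h p hp).differentiableAt (by simp)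

theorem hasDerivAt_sliceX {G : ℝ × ℝ × ℝ → ℝ} {x y t : ℝ}
    (h : DifferentiableAt ℝ G (x, y, t)) :
    HasDerivAt (fun a => G (a, y, t)) (Pd eX G (x,y,t)) x := by
  have h1 : HasDerivAt (fun a : ℝ => (a, y, t)) ((1:ℝ), (0:ℝ), (0:ℝ)) x :=
    (hasDerivAt_id x).prodMk (hasDerivAt_const x (y, t))
  exact h.hasFDerivAt.comp_hasDerivAt x h1

theorem hasDerivAt_sliceY {G : ℝ × ℝ × ℝ → ℝ} {x y t : ℝ}
    (h : DifferentiableAt ℝ G (x, y, t)) :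
    HasDerivAt (fun b => G (x, b, t)) (Pd eY G (x,y,t)) y := by
  have h1 : HasDerivAt (fun b : ℝ => (x, b, t)) ((0:ℝ), (1:ℝ), (0:ℝ)) y :=
    (hasDerivAt_const y x).prodMk ((hasDerivAt_id y).prodMk (hasDerivAt_const y t))
  exact h.hasFDerivAt.comp_hasDerivAt y h1

theorem hasDerivAt_sliceT {G : ℝ × ℝ × ℝ → ℝ} {x y t : ℝ}
    (h : DifferentiableAt ℝ G (x, y, t)) :
    HasDerivAt (fun c => G (x, y, c)) (Pd eT G (x,y,t)) t := by
  have h1 : HasDerivAt (fun c : ℝ => (x, y, c)) ((0:ℝ), (0:ℝ), (1:ℝ)) t :=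
    (hasDerivAt_const t x).prodMk ((hasDerivAt_const t y).prodMk (hasDerivAt_id t))
  exact h.hasFDerivAt.comp_hasDerivAt t h1

theorem Pd_congr {G H : ℝ × ℝ × ℝ → ℝ} {p : ℝ × ℝ × ℝ} (v : ℝ × ℝ × ℝ)
    (h : G =ᶠ[nhds p] H) : Pd v G p = Pd v H p := by
  unfold Pd; rw [Filter.EventuallyEq.fderiv_eq h]

theorem pd_comm {G : ℝ × ℝ × ℝ → ℝ} {p : ℝ × ℝ × ℝ} (h : ContDiffAt ℝ (⊤ : ℕ∞) G p)
    (v w : ℝ × ℝ × ℝ) : Pd v (Pd w G) p = Pd w (Pd v G) p := by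
  have hd : DifferentiableAt ℝ (fderiv ℝ G) p :=
    (h.fderiv_right (m := 1) (by exact WithTop.coe_le_coe.mpr le_top)).differentiableAt one_ne_zero
  have key : ∀ a b : ℝ × ℝ × ℝ, Pd a (Pd b G) p = fderiv ℝ (fderiv ℝ G) p a b := by
    intro a b
    have h0 : Pd a (Pd b G) p = fderiv ℝ (fun q => fderiv ℝ G q b) p a := rfl
    rw [h0, fderiv_clm_apply hd (differentiableAt_const b)]
    simp
  rw [key, key, (h.isSymmSndFDerivAt (by simp; exact WithTop.coe_le_coe.mpr (le_top : (2:ℕ∞) ≤ ⊤))).eq]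

section SliceLemmas
variable {T : ℝ} {G : ℝ × ℝ × ℝ → ℝ}

theorem derivY_slice (h : SmU T G) {x y t : ℝ} (ht : t ∈ Set.Ioo 0 T) :
    deriv (fun b => G (x, b, t)) y = Pd eY G (x,y,t) :=
  (hasDerivAt_sliceY (h.diffAt ht)).deriv

theorem derivX_slice (h : SmU T G) {x y t : ℝ} (ht : t ∈ Set.Ioo 0 T) :
    deriv (fun a => G (a, y, t)) x = Pd eX G (x,y,t) :=
  (hasDerivAt_sliceX (h.diffAt ht)).deriv

theorem iterY_slice (h : SmU T G) {x t : ℝ} (ht : t ∈ Set.Ioo 0 T) (n : ℕ) :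
    ∀ y : ℝ, iteratedDeriv n (fun b => G (x, b, t)) y = ((Pd eY)^[n] G) (x,y,t) := by
  induction n generalizing G with
  | zero => intro y; simp
  | succ n ih =>
    intro y
    rw [iteratedDeriv_succ']
    have h1 : deriv (fun b => G (x, b, t)) = fun b => Pd eY G (x, b, t) :=
      funext fun b => derivY_slice h ht
    rw [h1, Function.iterate_succ_apply]
    exact ih (h.pd _) y

theorem iterX_slice (h : SmU T G) {y t : ℝ} (ht : t ∈ Set.Ioo 0 T) (n : ℕ) :
    ∀ x : ℝ, iteratedDeriv n (fun a => G (a, y, t)) x = ((Pd eX)^[n] G) (x,y,t) := by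
  induction n generalizing G with
  | zero => intro x; simp
  | succ n ih =>
    intro x
    rw [iteratedDeriv_succ']
    have h1 : deriv (fun a => G (a, y, t)) = fun a => Pd eX G (a, y, t) :=
      funext fun a => derivX_slice h ht
    rw [h1, Function.iterate_succ_apply]
    exact ih (h.pd _) x

/-- joint continuity of a time slice -/
theorem SmU.contXY (h : SmU T G) {s : ℝ} (hs : s ∈ Set.Ioo 0 T) :
    Continuous (fun q : ℝ × ℝ => G (q.1, q.2, s)) := by
  rw [continuous_iff_continuousAt]
  intro q
  have hm : Continuous (fun q : ℝ × ℝ => (q.1, q.2, s)) := by fun_prop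
  have h2 := ContinuousAt.comp (f := fun q : ℝ × ℝ => (q.1, q.2, s)) (g := G)
    ((h (q.1, q.2, s) hs).continuousAt) hm.continuousAt
  exact h2

/-- U3 is open and in the nhds of interior points -/
theorem U3_mem_nhds {p : ℝ × ℝ × ℝ} (hp : p.2.2 ∈ Set.Ioo 0 T) :
    (Set.univ ×ˢ Set.univ ×ˢ Set.Ioo 0 T : Set (ℝ×ℝ×ℝ)) ∈ nhds p :=
  (isOpen_univ.prod (isOpen_univ.prod isOpen_Ioo)).mem_nhds (by
    simp [Set.mem_prod, hp])

end SliceLemmas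

theorem hasDerivAt_primitive {g : ℝ → ℝ} (h : Continuous g) (y : ℝ) :
    HasDerivAt (fun b => ∫ y' in (0:ℝ)..b, g y') (g y) y :=
  intervalIntegral.integral_hasDerivAt_right (h.intervalIntegrable _ _)
    (h.stronglyMeasurable.stronglyMeasurableAtFilter) h.continuousAt

theorem hasDerivAt_parint {A A' : ℝ × ℝ → ℝ}
    (hd : ∀ p : ℝ × ℝ, HasDerivAt (fun a => A (a, p.2)) (A' p) p.1)
    (hA' : Continuous A') (hAy : ∀ a : ℝ, Continuous fun y => A (a, y)) (c x : ℝ) :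
    HasDerivAt (fun a => ∫ y' in (0:ℝ)..c, A (a, y')) (∫ y' in (0:ℝ)..c, A' (x, y')) x := by
  have hK : IsCompact (Set.Icc (x-1) (x+1) ×ˢ Set.uIcc (0:ℝ) c) :=
    isCompact_Icc.prod isCompact_uIcc
  obtain ⟨M, hM⟩ := hK.exists_bound_of_continuousOn hA'.continuousOn
  have main := intervalIntegral.hasDerivAt_integral_of_dominated_loc_of_deriv_le
    (F := fun a y => A (a, y)) (F' := fun a y => A' (a, y)) (x₀ := x) (a := 0) (b := c)
    (bound := fun _ => M) (s := Metric.ball x 1) (Metric.ball_mem_nhds x one_pos)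
    (Filter.Eventually.of_forall fun a => ((hAy a).aestronglyMeasurable))
    ((hAy x).intervalIntegrable (μ := volume) _ _)
    ((hA'.comp (continuous_const.prodMk continuous_id)).aestronglyMeasurable)
    ?_ (intervalIntegrable_const) ?_
  · exact main.2
  · refine Filter.Eventually.of_forall fun y hy a ha => ?_
    refine hM (a, y) ⟨?_, Set.uIoc_subset_uIcc hy⟩
    have h2 : |a - x| < 1 := by simpa using mem_ball_iff_norm.mp ha
    constructor <;> [linarith [abs_lt.mp h2] ; linarith [abs_lt.mp h2]]
  · exact Filter.Eventually.of_forall fun y _ a _ => hd (a, y)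

section PDEConv
variable {u : ℝ → ℝ → ℝ → ℝ} {T : ℝ}

theorem SmU.sq (h : SmU T (F3 u)) : SmU T (fun p => (F3 u) p ^ 2) :=
  fun p hp => (h p hp).pow 2

theorem iter2eq (G : ℝ×ℝ×ℝ→ℝ) : (Pd eY)^[2] G = Pd eY (Pd eY G) := rfl
theorem iter3eq (G : ℝ×ℝ×ℝ→ℝ) : (Pd eY)^[3] G = Pd eY (Pd eY (Pd eY G)) := rfl
theorem iter4eq (G : ℝ×ℝ×ℝ→ℝ) : (Pd eY)^[4] G = Pd eY (Pd eY (Pd eY (Pd eY G))) := rfl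
theorem iter3eqX (G : ℝ×ℝ×ℝ→ℝ) : (Pd eX)^[3] G = Pd eX (Pd eX (Pd eX G)) := rfl

theorem pde_interior {γ α β : ℝ} (hsm : SmU T (F3 u))
    (hpde : ∀ x y t, t ∈ Set.Icc 0 T →
      deriv (fun t' => iteratedDeriv 2 (fun y' => u x y' t') y) t
        - γ * iteratedDeriv 3 (fun x' => u x' y t) x
        - α * iteratedDeriv 4 (fun y' => u x y' t) y
        - β * iteratedDeriv 2 (fun y' => u x y' t) y
        + iteratedDeriv 2 (fun y' => deriv (fun x' => (u x' y' t)^2) x) y = 0) :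
    ∀ x y t, t ∈ Set.Ioo 0 T →
      Pd eY (Pd eY (Pd eT (F3 u))) (x,y,t)
        = γ * Pd eX (Pd eX (Pd eX (F3 u))) (x,y,t)
          + α * Pd eY (Pd eY (Pd eY (Pd eY (F3 u)))) (x,y,t)
          + β * Pd eY (Pd eY (F3 u)) (x,y,t)
          - Pd eY (Pd eY (Pd eX (fun p => (F3 u) p ^ 2))) (x,y,t) := by
  intro x y t ht
  have h0 := hpde x y t ⟨ht.1.le, ht.2.le⟩
  have hA : deriv (fun t' => iteratedDeriv 2 (fun y' => u x y' t') y) t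
      = Pd eT (Pd eY (Pd eY (F3 u))) (x,y,t) := by
    have hcong : (fun t' => iteratedDeriv 2 (fun y' => u x y' t') y) =ᶠ[nhds t]
        (fun t' => Pd eY (Pd eY (F3 u)) (x,y,t')) := by
      filter_upwards [isOpen_Ioo.mem_nhds ht] with t' ht'
      have := iterY_slice (x := x) hsm ht' 2 y
      rw [iter2eq] at this
      exact this
    rw [hcong.deriv_eq]
    exact (hasDerivAt_sliceT (((hsm.pd eY).pd eY).diffAt ht)).deriv
  have hswap : Pd eT (Pd eY (Pd eY (F3 u))) (x,y,t)
      = Pd eY (Pd eY (Pd eT (F3 u))) (x,y,t) := by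
    have s1 : Pd eT (Pd eY (Pd eY (F3 u))) (x,y,t)
        = Pd eY (Pd eT (Pd eY (F3 u))) (x,y,t) :=
      pd_comm ((hsm.pd eY) (x,y,t) ht) eT eY
    have s2 : Pd eY (Pd eT (Pd eY (F3 u))) (x,y,t)
        = Pd eY (Pd eY (Pd eT (F3 u))) (x,y,t) := by
      refine Pd_congr eY ?_
      filter_upwards [U3_mem_nhds ht] with q hq
      exact pd_comm (hsm q hq.2.2) eT eY
    rw [s1, s2]
  have hB : iteratedDeriv 3 (fun x' => u x' y t) x
      = Pd eX (Pd eX (Pd eX (F3 u))) (x,y,t) := by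
    have := iterX_slice (y := y) hsm ht 3 x; rwa [iter3eqX] at this
  have hC : iteratedDeriv 4 (fun y' => u x y' t) y
      = Pd eY (Pd eY (Pd eY (Pd eY (F3 u)))) (x,y,t) := by
    have := iterY_slice (x := x) hsm ht 4 y; rwa [iter4eq] at this
  have hD : iteratedDeriv 2 (fun y' => u x y' t) y
      = Pd eY (Pd eY (F3 u)) (x,y,t) := by
    have := iterY_slice (x := x) hsm ht 2 y; rwa [iter2eq] at this
  have hE : iteratedDeriv 2 (fun y' => deriv (fun x' => (u x' y' t)^2) x) y
      = Pd eY (Pd eY (Pd eX (fun p => (F3 u) p ^ 2))) (x,y,t) := by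
    have h1 : (fun y' => deriv (fun x' => (u x' y' t)^2) x)
        = fun y' => Pd eX (fun p => (F3 u) p ^ 2) (x,y',t) :=
      funext fun y' => (hasDerivAt_sliceX ((SmU.sq hsm).diffAt ht)).deriv
    rw [h1]
    have := iterY_slice (x := x) ((SmU.sq hsm).pd eX) ht 2 y; rwa [iter2eq] at this
  rw [hA, hswap, hB, hC, hD, hE] at h0
  linarith

theorem bY0 (hsm : SmU T (F3 u))
    (hbc0 : ∀ x t, t ∈ Set.Icc 0 T →
      deriv (fun y => u x y t) 0 = 0 ∧ deriv (fun y => u x y t) π = 0) :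
    ∀ x, ∀ t ∈ Set.Ioo 0 T, Pd eY (F3 u) (x,0,t) = 0 ∧ Pd eY (F3 u) (x,π,t) = 0 := by
  intro x t ht
  constructor
  · rw [← derivY_slice hsm ht]; exact (hbc0 x t ⟨ht.1.le, ht.2.le⟩).1
  · rw [← derivY_slice hsm ht]; exact (hbc0 x t ⟨ht.1.le, ht.2.le⟩).2

theorem bY3 (hsm : SmU T (F3 u))
    (hbc3 : ∀ x t, t ∈ Set.Icc 0 T →
      iteratedDeriv 3 (fun y => u x y t) 0 = 0 ∧
      iteratedDeriv 3 (fun y => u x y t) π = 0) :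
    ∀ x, ∀ t ∈ Set.Ioo 0 T, Pd eY (Pd eY (Pd eY (F3 u))) (x,0,t) = 0 ∧
      Pd eY (Pd eY (Pd eY (F3 u))) (x,π,t) = 0 := by
  intro x t ht
  have h1 := iterY_slice (x := x) hsm ht 3 (0:ℝ); rw [iter3eq] at h1
  have h2 := iterY_slice (x := x) hsm ht 3 π; rw [iter3eq] at h2
  exact ⟨h1 ▸ (hbc3 x t ⟨ht.1.le, ht.2.le⟩).1, h2 ▸ (hbc3 x t ⟨ht.1.le, ht.2.le⟩).2⟩

theorem bT (hsm : SmU T (F3 u))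
    (hbc0 : ∀ x t, t ∈ Set.Icc 0 T →
      deriv (fun y => u x y t) 0 = 0 ∧ deriv (fun y => u x y t) π = 0) :
    ∀ x, ∀ t ∈ Set.Ioo 0 T, ∀ y0 ∈ ({0, π} : Set ℝ),
      Pd eT (Pd eY (F3 u)) (x,y0,t) = 0 := by
  intro x t ht y0 hy0
  have hslice : HasDerivAt (fun c => Pd eY (F3 u) (x,y0,c))
      (Pd eT (Pd eY (F3 u)) (x,y0,t)) t := hasDerivAt_sliceT ((hsm.pd eY).diffAt ht)
  have hev : (fun _ : ℝ => (0:ℝ)) =ᶠ[nhds t] (fun c => Pd eY (F3 u) (x,y0,c)) := by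
    filter_upwards [isOpen_Ioo.mem_nhds ht] with t' ht'
    rw [← derivY_slice hsm ht']
    rcases hy0 with h | h
    · rw [h]; exact ((hbc0 x t' ⟨ht'.1.le, ht'.2.le⟩).1).symm
    · rw [Set.mem_singleton_iff.mp h]; exact ((hbc0 x t' ⟨ht'.1.le, ht'.2.le⟩).2).symm
  have h1 : HasDerivAt (fun _ : ℝ => (0:ℝ)) (Pd eT (Pd eY (F3 u)) (x,y0,t)) t :=
    hslice.congr_of_eventuallyEq hev
  exact (h1.unique (hasDerivAt_const t 0))

theorem bXY (hsm : SmU T (F3 u))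
    (hbc0 : ∀ x t, t ∈ Set.Icc 0 T →
      deriv (fun y => u x y t) 0 = 0 ∧ deriv (fun y => u x y t) π = 0) :
    ∀ x, ∀ t ∈ Set.Ioo 0 T, ∀ y0 ∈ ({0, π} : Set ℝ),
      Pd eX (Pd eY (F3 u)) (x,y0,t) = 0 := by
  intro x t ht y0 hy0
  have hslice : HasDerivAt (fun a => Pd eY (F3 u) (a,y0,t))
      (Pd eX (Pd eY (F3 u)) (x,y0,t)) x := hasDerivAt_sliceX ((hsm.pd eY).diffAt ht)
  have hev : (fun a => Pd eY (F3 u) (a,y0,t)) = (fun _ : ℝ => (0:ℝ)) := by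
    funext a
    rcases hy0 with h | h
    · rw [h]; exact (bY0 hsm hbc0 a t ht).1
    · rw [Set.mem_singleton_iff.mp h]; exact (bY0 hsm hbc0 a t ht).2
  rw [hev] at hslice
  exact hslice.unique (hasDerivAt_const x 0)

theorem qx_eq (hsm : SmU T (F3 u)) :
    ∀ x y t, t ∈ Set.Ioo 0 T →
      Pd eX (fun p => (F3 u) p ^ 2) (x,y,t) = 2 * u x y t * Pd eX (F3 u) (x,y,t) := by
  intro x y t ht
  have h1 : HasDerivAt (fun a => (F3 u) (a,y,t) ^ 2)
      (Pd eX (fun p => (F3 u) p ^ 2) (x,y,t)) x := hasDerivAt_sliceX ((SmU.sq hsm).diffAt ht)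
  have h2 : HasDerivAt (fun a => (F3 u) (a,y,t) ^ 2)
      ((2:ℕ) * (F3 u) (x,y,t) ^ (2-1) * Pd eX (F3 u) (x,y,t)) x :=
    (hasDerivAt_sliceX (hsm.diffAt ht)).pow 2
  have := h1.unique h2
  rw [this]; norm_num [F3]

theorem bQ (hsm : SmU T (F3 u))
    (hbc0 : ∀ x t, t ∈ Set.Icc 0 T →
      deriv (fun y => u x y t) 0 = 0 ∧ deriv (fun y => u x y t) π = 0) :
    ∀ x, ∀ t ∈ Set.Ioo 0 T, ∀ y0 ∈ ({0, π} : Set ℝ),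
      Pd eY (Pd eX (fun p => (F3 u) p ^ 2)) (x,y0,t) = 0 := by
  intro x t ht y0 hy0
  have hK : SmU T (fun p => 2 * (F3 u) p * Pd eX (F3 u) p) := by
    intro p hp
    exact (contDiffAt_const.mul (hsm p hp)).mul ((hsm.pd eX) p hp)
  have e1 : Pd eY (Pd eX (fun p => (F3 u) p ^ 2)) (x,y0,t)
      = Pd eY (fun p => 2 * (F3 u) p * Pd eX (F3 u) p) (x,y0,t) := by
    refine Pd_congr eY ?_
    filter_upwards [U3_mem_nhds ht] with q hq
    have := qx_eq hsm q.1 q.2.1 q.2.2 hq.2.2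
    simpa [F3] using this
  rw [e1]
  have hslice : HasDerivAt (fun b => 2 * (F3 u) (x,b,t) * Pd eX (F3 u) (x,b,t))
      (Pd eY (fun p => 2 * (F3 u) p * Pd eX (F3 u) p) (x,y0,t)) y0 :=
    hasDerivAt_sliceY (hK.diffAt ht)
  have hslice2 : HasDerivAt (fun b => 2 * (F3 u) (x,b,t) * Pd eX (F3 u) (x,b,t))
      ((2 * Pd eY (F3 u) (x,y0,t)) * Pd eX (F3 u) (x,y0,t)
        + (2 * (F3 u) (x,y0,t)) * Pd eY (Pd eX (F3 u)) (x,y0,t)) y0 :=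
    ((hasDerivAt_sliceY (hsm.diffAt ht)).const_mul 2).mul
      (hasDerivAt_sliceY ((hsm.pd eX).diffAt ht))
  have huniq := hslice.unique hslice2
  rw [huniq]
  have z1 : Pd eY (F3 u) (x,y0,t) = 0 := by
    rcases hy0 with h | h
    · rw [h]; exact (bY0 hsm hbc0 x t ht).1
    · rw [Set.mem_singleton_iff.mp h]; exact (bY0 hsm hbc0 x t ht).2
  have z2 : Pd eY (Pd eX (F3 u)) (x,y0,t) = 0 := by
    rw [pd_comm (hsm (x,y0,t) ht) eY eX]
    exact bXY hsm hbc0 x t ht y0 hy0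
  rw [z1, z2]; ring

end PDEConv

theorem cont_of_hasDerivAt {f f' : ℝ → ℝ} (h : ∀ x, HasDerivAt f (f' x) x) :
    Continuous f :=
  continuous_iff_continuousAt.2 fun x => (h x).continuousAt

theorem Continuous.sliceL {k : ℝ × ℝ → ℝ} (h : Continuous k) (x : ℝ) :
    Continuous fun y => k (x, y) :=
  h.comp (continuous_const.prodMk continuous_id)

theorem Continuous.sliceR {k : ℝ × ℝ → ℝ} (h : Continuous k) (y : ℝ) :
    Continuous fun x => k (x, y) :=
  h.comp (continuous_id.prodMk continuous_const)

/-- Fubini for continuous integrands on rectangles -/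
theorem swap_cont {k : ℝ × ℝ → ℝ} (hk : Continuous k) {a b : ℝ} (ha : 0 ≤ a) (hb : 0 ≤ b) :
    ∫ x in (0:ℝ)..a, ∫ y in (0:ℝ)..b, k (x,y) = ∫ y in (0:ℝ)..b, ∫ x in (0:ℝ)..a, k (x,y) := by
  rw [intervalIntegral.integral_of_le ha, intervalIntegral.integral_of_le hb]
  simp only [intervalIntegral.integral_of_le ha, intervalIntegral.integral_of_le hb]
  have hint : Integrable (Function.uncurry fun x y => k (x, y))
      ((volume.restrict (Set.Ioc 0 a)).prod (volume.restrict (Set.Ioc 0 b))) := by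
    rw [Measure.prod_restrict]
    have hcomp : IsCompact (Set.Icc (0:ℝ) a ×ˢ Set.Icc (0:ℝ) b) := isCompact_Icc.prod isCompact_Icc
    have : IntegrableOn k (Set.Icc (0:ℝ) a ×ˢ Set.Icc (0:ℝ) b) (volume.prod volume) :=
      (hk.locallyIntegrable).integrableOn_isCompact hcomp
    exact this.mono_set (Set.prod_mono Set.Ioc_subset_Icc_self Set.Ioc_subset_Icc_self)
  exact MeasureTheory.integral_integral_swap hint

/-- periodicity of x-partial derivative -/
theorem per_pdX {T : ℝ} {G : ℝ × ℝ × ℝ → ℝ} (hsm : SmU T G) {y t : ℝ}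
    (ht : t ∈ Set.Ioo 0 T) (hper : ∀ a, G (a + 2*π, y, t) = G (a, y, t)) :
    ∀ x, Pd eX G (x + 2*π, y, t) = Pd eX G (x, y, t) := by
  intro x
  rw [← derivX_slice hsm ht, ← derivX_slice hsm ht]
  have h1 : deriv (fun a => G (a, y, t)) (x + 2*π)
      = deriv (fun a => G (a + 2*π, y, t)) x := (deriv_comp_add_const _ _ _).symm
  rw [h1]
  congr 1
  funext a
  exact hper a

section Spatial
variable {u : ℝ → ℝ → ℝ → ℝ} {T γ α β : ℝ}

theorem step1 (hsm : SmU T (F3 u))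
    (hbc0 : ∀ x t, t ∈ Set.Icc 0 T →
      deriv (fun y => u x y t) 0 = 0 ∧ deriv (fun y => u x y t) π = 0)
    (hbc3 : ∀ x t, t ∈ Set.Icc 0 T →
      iteratedDeriv 3 (fun y => u x y t) 0 = 0 ∧
      iteratedDeriv 3 (fun y => u x y t) π = 0)
    (hpde : ∀ x y t, t ∈ Set.Icc 0 T →
      deriv (fun t' => iteratedDeriv 2 (fun y' => u x y' t') y) t
        - γ * iteratedDeriv 3 (fun x' => u x' y t) x
        - α * iteratedDeriv 4 (fun y' => u x y' t) y
        - β * iteratedDeriv 2 (fun y' => u x y' t) y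
        + iteratedDeriv 2 (fun y' => deriv (fun x' => (u x' y' t)^2) x) y = 0)
    {s : ℝ} (hs : s ∈ Set.Ioo 0 T) :
    ∀ x y, Pd eY (Pd eT (F3 u)) (x,y,s)
      = γ * (∫ y' in (0:ℝ)..y, Pd eX (Pd eX (Pd eX (F3 u))) (x,y',s))
        + α * Pd eY (Pd eY (Pd eY (F3 u))) (x,y,s)
        + β * Pd eY (F3 u) (x,y,s)
        - Pd eY (Pd eX (fun p => F3 u p ^ 2)) (x,y,s) := by
  intro x y0
  have hcont3 : Continuous fun y => Pd eX (Pd eX (Pd eX (F3 u))) (x,y,s) :=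
    ((((hsm.pd eX).pd eX).pd eX).contXY hs).sliceL x
  have hPd : ∀ y, HasDerivAt (fun y =>
      Pd eY (Pd eT (F3 u)) (x,y,s)
      - γ * (∫ y' in (0:ℝ)..y, Pd eX (Pd eX (Pd eX (F3 u))) (x,y',s))
      - α * Pd eY (Pd eY (Pd eY (F3 u))) (x,y,s)
      - β * Pd eY (F3 u) (x,y,s)
      + Pd eY (Pd eX (fun p => F3 u p ^ 2)) (x,y,s)) 0 y := by
    intro y
    have d1 := hasDerivAt_sliceY (((hsm.pd eT).pd eY).diffAt (p := (x,y,s)) hs)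
    have d2 := (hasDerivAt_primitive hcont3 y).const_mul γ
    have d3 := (hasDerivAt_sliceY ((((hsm.pd eY).pd eY).pd eY).diffAt (p := (x,y,s)) hs)).const_mul α
    have d4 := (hasDerivAt_sliceY ((hsm.pd eY).diffAt (p := (x,y,s)) hs)).const_mul β
    have d5 := hasDerivAt_sliceY ((((SmU.sq hsm).pd eX).pd eY).diffAt (p := (x,y,s)) hs)
    have comb := (((d1.sub d2).sub d3).sub d4).add d5
    have hval : Pd eY (Pd eY (Pd eT (F3 u))) (x, y, s)
        - γ * Pd eX (Pd eX (Pd eX (F3 u))) (x, y, s)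
        - α * Pd eY (Pd eY (Pd eY (Pd eY (F3 u)))) (x, y, s)
        - β * Pd eY (Pd eY (F3 u)) (x, y, s)
        + Pd eY (Pd eY (Pd eX (fun p => F3 u p ^ 2))) (x, y, s) = 0 := by
      have h := pde_interior hsm hpde x y s hs
      linarith
    rw [hval] at comb
    exact comb
  have hdiff : Differentiable ℝ _ := fun y => (hPd y).differentiableAt
  have hconst := is_const_of_deriv_eq_zero hdiff (fun y => (hPd y).deriv) y0 0
  have A0 : Pd eY (Pd eT (F3 u)) (x,0,s) = 0 := by
    rw [pd_comm (hsm (x,0,s) hs) eY eT]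
    exact bT hsm hbc0 x s hs 0 (by simp)
  have C0 := (bY3 hsm hbc3 x s hs).1
  have D0 := (bY0 hsm hbc0 x s hs).1
  have E0 := bQ hsm hbc0 x s hs 0 (by simp)
  rw [A0, C0, D0, E0, intervalIntegral.integral_same] at hconst
  linarith [hconst]

theorem step2 (hsm : SmU T (F3 u))
    (hbc0 : ∀ x t, t ∈ Set.Icc 0 T →
      deriv (fun y => u x y t) 0 = 0 ∧ deriv (fun y => u x y t) π = 0)
    (hbc3 : ∀ x t, t ∈ Set.Icc 0 T →
      iteratedDeriv 3 (fun y => u x y t) 0 = 0 ∧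
      iteratedDeriv 3 (fun y => u x y t) π = 0)
    (havg : ∀ x t, t ∈ Set.Icc 0 T → ∫ y in (0:ℝ)..π, u x y t = 0)
    (hpde : ∀ x y t, t ∈ Set.Icc 0 T →
      deriv (fun t' => iteratedDeriv 2 (fun y' => u x y' t') y) t
        - γ * iteratedDeriv 3 (fun x' => u x' y t) x
        - α * iteratedDeriv 4 (fun y' => u x y' t) y
        - β * iteratedDeriv 2 (fun y' => u x y' t) y
        + iteratedDeriv 2 (fun y' => deriv (fun x' => (u x' y' t)^2) x) y = 0)
    {s : ℝ} (hs : s ∈ Set.Ioo 0 T) :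
    ∀ x, -(∫ y in (0:ℝ)..π, u x y s * Pd eT (F3 u) (x,y,s))
      = γ * (∫ y in (0:ℝ)..π,
          (∫ y' in (0:ℝ)..y, u x y' s) * (∫ y' in (0:ℝ)..y, Pd eX (Pd eX (Pd eX (F3 u))) (x,y',s)))
        + α * (∫ y in (0:ℝ)..π, (Pd eY (F3 u) (x,y,s))^2)
        - β * (∫ y in (0:ℝ)..π, (u x y s)^2)
        + (∫ y in (0:ℝ)..π, u x y s * Pd eX (fun p => F3 u p ^ 2) (x,y,s)) := by
  intro x
  -- continuity of the various y-slices
  have cf : Continuous fun y => u x y s := (hsm.contXY hs).sliceL x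
  have cg : Continuous fun y => Pd eT (F3 u) (x,y,s) := ((hsm.pd eT).contXY hs).sliceL x
  have cgy : Continuous fun y => Pd eY (Pd eT (F3 u)) (x,y,s) :=
    (((hsm.pd eT).pd eY).contXY hs).sliceL x
  have cfy : Continuous fun y => Pd eY (F3 u) (x,y,s) := ((hsm.pd eY).contXY hs).sliceL x
  have cfyy : Continuous fun y => Pd eY (Pd eY (F3 u)) (x,y,s) :=
    (((hsm.pd eY).pd eY).contXY hs).sliceL x
  have cfyyy : Continuous fun y => Pd eY (Pd eY (Pd eY (F3 u))) (x,y,s) :=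
    ((((hsm.pd eY).pd eY).pd eY).contXY hs).sliceL x
  have cqx : Continuous fun y => Pd eX (fun p => F3 u p ^ 2) (x,y,s) :=
    (((SmU.sq hsm).pd eX).contXY hs).sliceL x
  have cqxy : Continuous fun y => Pd eY (Pd eX (fun p => F3 u p ^ 2)) (x,y,s) :=
    ((((SmU.sq hsm).pd eX).pd eY).contXY hs).sliceL x
  have cfx3 : Continuous fun y => Pd eX (Pd eX (Pd eX (F3 u))) (x,y,s) :=
    ((((hsm.pd eX).pd eX).pd eX).contXY hs).sliceL x
  have cv : Continuous fun y => ∫ y' in (0:ℝ)..y, u x y' s :=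
    cont_of_hasDerivAt fun y => hasDerivAt_primitive cf y
  have cw : Continuous fun y => ∫ y' in (0:ℝ)..y, Pd eX (Pd eX (Pd eX (F3 u))) (x,y',s) :=
    cont_of_hasDerivAt fun y => hasDerivAt_primitive cfx3 y
  have hv0 : (∫ y' in (0:ℝ)..(0:ℝ), u x y' s) = 0 := intervalIntegral.integral_same
  have hvpi : (∫ y' in (0:ℝ)..π, u x y' s) = 0 := havg x s ⟨hs.1.le, hs.2.le⟩
  have hfy0 := (bY0 hsm hbc0 x s hs).1
  have hfypi := (bY0 hsm hbc0 x s hs).2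
  -- integration by parts A
  have ibpA := intervalIntegral.integral_mul_deriv_eq_deriv_mul (a := 0) (b := π)
    (u := fun y => ∫ y' in (0:ℝ)..y, u x y' s) (u' := fun y => u x y s)
    (v := fun y => Pd eT (F3 u) (x,y,s)) (v' := fun y => Pd eY (Pd eT (F3 u)) (x,y,s))
    (fun y _ => hasDerivAt_primitive cf y)
    (fun y _ => hasDerivAt_sliceY ((hsm.pd eT).diffAt (p := (x,y,s)) hs))
    (cf.intervalIntegrable _ _) (cgy.intervalIntegrable _ _)
  beta_reduce at ibpA
  rw [hv0, hvpi] at ibpA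
  -- integration by parts B
  have ibpB := intervalIntegral.integral_mul_deriv_eq_deriv_mul (a := 0) (b := π)
    (u := fun y => ∫ y' in (0:ℝ)..y, u x y' s) (u' := fun y => u x y s)
    (v := fun y => Pd eY (Pd eY (F3 u)) (x,y,s))
    (v' := fun y => Pd eY (Pd eY (Pd eY (F3 u))) (x,y,s))
    (fun y _ => hasDerivAt_primitive cf y)
    (fun y _ => hasDerivAt_sliceY (((hsm.pd eY).pd eY).diffAt (p := (x,y,s)) hs))
    (cf.intervalIntegrable _ _) (cfyyy.intervalIntegrable _ _)
  beta_reduce at ibpB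
  rw [hv0, hvpi] at ibpB
  have ibpB2 := intervalIntegral.integral_mul_deriv_eq_deriv_mul (a := 0) (b := π)
    (u := fun y => u x y s) (u' := fun y => Pd eY (F3 u) (x,y,s))
    (v := fun y => Pd eY (F3 u) (x,y,s))
    (v' := fun y => Pd eY (Pd eY (F3 u)) (x,y,s))
    (fun y _ => hasDerivAt_sliceY (hsm.diffAt (p := (x,y,s)) hs))
    (fun y _ => hasDerivAt_sliceY ((hsm.pd eY).diffAt (p := (x,y,s)) hs))
    (cfy.intervalIntegrable _ _) (cfyy.intervalIntegrable _ _)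
  beta_reduce at ibpB2
  rw [hfy0, hfypi] at ibpB2
  -- integration by parts C
  have ibpC := intervalIntegral.integral_mul_deriv_eq_deriv_mul (a := 0) (b := π)
    (u := fun y => ∫ y' in (0:ℝ)..y, u x y' s) (u' := fun y => u x y s)
    (v := fun y => u x y s) (v' := fun y => Pd eY (F3 u) (x,y,s))
    (fun y _ => hasDerivAt_primitive cf y)
    (fun y _ => hasDerivAt_sliceY (hsm.diffAt (p := (x,y,s)) hs))
    (cf.intervalIntegrable _ _) (cfy.intervalIntegrable _ _)
  beta_reduce at ibpC
  rw [hv0, hvpi] at ibpC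
  -- integration by parts D
  have ibpD := intervalIntegral.integral_mul_deriv_eq_deriv_mul (a := 0) (b := π)
    (u := fun y => ∫ y' in (0:ℝ)..y, u x y' s) (u' := fun y => u x y s)
    (v := fun y => Pd eX (fun p => F3 u p ^ 2) (x,y,s))
    (v' := fun y => Pd eY (Pd eX (fun p => F3 u p ^ 2)) (x,y,s))
    (fun y _ => hasDerivAt_primitive cf y)
    (fun y _ => hasDerivAt_sliceY (((SmU.sq hsm).pd eX).diffAt (p := (x,y,s)) hs))
    (cf.intervalIntegrable _ _) (cqxy.intervalIntegrable _ _)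
  beta_reduce at ibpD
  rw [hv0, hvpi] at ibpD
  -- split the integral of v * gy using step1
  have e1 : (fun y => (∫ y' in (0:ℝ)..y, u x y' s) * Pd eY (Pd eT (F3 u)) (x,y,s))
      = fun y => γ * ((∫ y' in (0:ℝ)..y, u x y' s)
            * (∫ y' in (0:ℝ)..y, Pd eX (Pd eX (Pd eX (F3 u))) (x,y',s)))
        + α * ((∫ y' in (0:ℝ)..y, u x y' s) * Pd eY (Pd eY (Pd eY (F3 u))) (x,y,s))
        + β * ((∫ y' in (0:ℝ)..y, u x y' s) * Pd eY (F3 u) (x,y,s))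
        - (∫ y' in (0:ℝ)..y, u x y' s) * Pd eY (Pd eX (fun p => F3 u p ^ 2)) (x,y,s) := by
    funext y
    rw [step1 hsm hbc0 hbc3 hpde hs x y]
    ring
  have i1 : IntervalIntegrable (fun y => (∫ y' in (0:ℝ)..y, u x y' s)
      * (∫ y' in (0:ℝ)..y, Pd eX (Pd eX (Pd eX (F3 u))) (x,y',s))) volume 0 π :=
    (cv.mul cw).intervalIntegrable _ _
  have i2 : IntervalIntegrable (fun y => (∫ y' in (0:ℝ)..y, u x y' s)
      * Pd eY (Pd eY (Pd eY (F3 u))) (x,y,s)) volume 0 π := (cv.mul cfyyy).intervalIntegrable _ _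
  have i3 : IntervalIntegrable (fun y => (∫ y' in (0:ℝ)..y, u x y' s)
      * Pd eY (F3 u) (x,y,s)) volume 0 π := (cv.mul cfy).intervalIntegrable _ _
  have i4 : IntervalIntegrable (fun y => (∫ y' in (0:ℝ)..y, u x y' s)
      * Pd eY (Pd eX (fun p => F3 u p ^ 2)) (x,y,s)) volume 0 π :=
    (cv.mul cqxy).intervalIntegrable _ _
  have hsplit : (∫ y in (0:ℝ)..π, (∫ y' in (0:ℝ)..y, u x y' s) * Pd eY (Pd eT (F3 u)) (x,y,s))
      = γ * (∫ y in (0:ℝ)..π, (∫ y' in (0:ℝ)..y, u x y' s)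
            * (∫ y' in (0:ℝ)..y, Pd eX (Pd eX (Pd eX (F3 u))) (x,y',s)))
        + α * (∫ y in (0:ℝ)..π, (∫ y' in (0:ℝ)..y, u x y' s)
            * Pd eY (Pd eY (Pd eY (F3 u))) (x,y,s))
        + β * (∫ y in (0:ℝ)..π, (∫ y' in (0:ℝ)..y, u x y' s) * Pd eY (F3 u) (x,y,s))
        - (∫ y in (0:ℝ)..π, (∫ y' in (0:ℝ)..y, u x y' s)
            * Pd eY (Pd eX (fun p => F3 u p ^ 2)) (x,y,s)) := by
    rw [e1]
    rw [intervalIntegral.integral_sub (((i1.const_mul γ).add (i2.const_mul α)).add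
      (i3.const_mul β)) i4]
    rw [intervalIntegral.integral_add ((i1.const_mul γ).add (i2.const_mul α)) (i3.const_mul β)]
    rw [intervalIntegral.integral_add (i1.const_mul γ) (i2.const_mul α)]
    rw [intervalIntegral.integral_const_mul, intervalIntegral.integral_const_mul,
      intervalIntegral.integral_const_mul]
  -- squares
  have sq1 : (∫ y in (0:ℝ)..π, Pd eY (F3 u) (x,y,s) * Pd eY (F3 u) (x,y,s))
      = ∫ y in (0:ℝ)..π, (Pd eY (F3 u) (x,y,s))^2 := by
    congr 1; funext y; ring
  have sq2 : (∫ y in (0:ℝ)..π, u x y s * u x y s) = ∫ y in (0:ℝ)..π, (u x y s)^2 := by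
    congr 1; funext y; ring
  rw [sq1] at ibpB2
  rw [sq2] at ibpC
  rw [hsplit] at ibpA
  rw [ibpB2] at ibpB
  rw [ibpB, ibpC, ibpD] at ibpA
  linarith [ibpA]

theorem vanishing1 (hsm : SmU T (F3 u))
    (hper : ∀ x y t, u (x + 2*π) y t = u x y t)
    {s : ℝ} (hs : s ∈ Set.Ioo 0 T) :
    ∫ x in (0:ℝ)..2*π, ∫ y in (0:ℝ)..π,
      u x y s * Pd eX (fun p => F3 u p ^ 2) (x,y,s) = 0 := by
  have hk : Continuous fun q : ℝ × ℝ => u q.1 q.2 s * Pd eX (fun p => F3 u p ^ 2) (q.1,q.2,s) :=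
    (hsm.contXY hs).mul (((SmU.sq hsm).pd eX).contXY hs)
  have hswap : (∫ x in (0:ℝ)..2*π, ∫ y in (0:ℝ)..π,
        u x y s * Pd eX (fun p => F3 u p ^ 2) (x,y,s))
      = ∫ y in (0:ℝ)..π, ∫ x in (0:ℝ)..2*π,
        u x y s * Pd eX (fun p => F3 u p ^ 2) (x,y,s) :=
    swap_cont hk (by positivity) (by positivity)
  rw [hswap]
  have hzero : ∀ y : ℝ, (∫ x in (0:ℝ)..2*π,
      u x y s * Pd eX (fun p => F3 u p ^ 2) (x,y,s)) = 0 := by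
    intro y
    have hder : ∀ a ∈ Set.uIcc (0:ℝ) (2*π),
        HasDerivAt (fun a => (2/3 : ℝ) * (u a y s)^3)
          (u a y s * Pd eX (fun p => F3 u p ^ 2) (a,y,s)) a := by
      intro a _
      have h1 : HasDerivAt (fun a => (u a y s)^3)
          ((3:ℕ) * (u a y s)^(3-1) * Pd eX (F3 u) (a,y,s)) a :=
        (hasDerivAt_sliceX (hsm.diffAt (p := (a,y,s)) hs)).pow 3
      have h2 := h1.const_mul ((2:ℝ)/3)
      refine h2.congr_deriv ?_
      rw [qx_eq hsm a y s hs]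
      push_cast; ring
    rw [intervalIntegral.integral_eq_sub_of_hasDerivAt hder
      (((hsm.contXY hs).sliceR y |>.mul ((((SmU.sq hsm).pd eX).contXY hs).sliceR y)).intervalIntegrable _ _)]
    have h2pi : u (2*π) y s = u 0 y s := by
      have := hper 0 y s; rwa [zero_add] at this
    rw [h2pi]; ring
  simp only [hzero, intervalIntegral.integral_zero]

theorem vanishing2 (hsm : SmU T (F3 u))
    (hper : ∀ x y t, u (x + 2*π) y t = u x y t)
    {s : ℝ} (hs : s ∈ Set.Ioo 0 T) :
    ∫ x in (0:ℝ)..2*π, ∫ y in (0:ℝ)..π,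
      (∫ y' in (0:ℝ)..y, u x y' s)
        * (∫ y' in (0:ℝ)..y, Pd eX (Pd eX (Pd eX (F3 u))) (x,y',s)) = 0 := by
  have c1 : Continuous fun q : ℝ × ℝ => ∫ y' in (0:ℝ)..q.2, u q.1 y' s :=
    continuous_parametric_primitive_of_continuous (f := fun x y' => u x y' s)
      (hsm.contXY hs)
  have c2 : Continuous fun q : ℝ × ℝ =>
      ∫ y' in (0:ℝ)..q.2, Pd eX (Pd eX (Pd eX (F3 u))) (q.1,y',s) :=
    continuous_parametric_primitive_of_continuous
      (f := fun x y' => Pd eX (Pd eX (Pd eX (F3 u))) (x,y',s))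
      ((((hsm.pd eX).pd eX).pd eX).contXY hs)
  have hk : Continuous fun q : ℝ × ℝ => (∫ y' in (0:ℝ)..q.2, u q.1 y' s)
      * (∫ y' in (0:ℝ)..q.2, Pd eX (Pd eX (Pd eX (F3 u))) (q.1,y',s)) := c1.mul c2
  have hswap : (∫ x in (0:ℝ)..2*π, ∫ y in (0:ℝ)..π,
        (∫ y' in (0:ℝ)..y, u x y' s)
          * (∫ y' in (0:ℝ)..y, Pd eX (Pd eX (Pd eX (F3 u))) (x,y',s)))
      = ∫ y in (0:ℝ)..π, ∫ x in (0:ℝ)..2*π,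
        (∫ y' in (0:ℝ)..y, u x y' s)
          * (∫ y' in (0:ℝ)..y, Pd eX (Pd eX (Pd eX (F3 u))) (x,y',s)) :=
    swap_cont hk (by positivity) (by positivity)
  rw [hswap]
  have hzero : ∀ y : ℝ, (∫ x in (0:ℝ)..2*π,
      (∫ y' in (0:ℝ)..y, u x y' s)
        * (∫ y' in (0:ℝ)..y, Pd eX (Pd eX (Pd eX (F3 u))) (x,y',s))) = 0 := by
    intro y
    -- derivative families
    have hv : ∀ a : ℝ, HasDerivAt (fun a => ∫ y' in (0:ℝ)..y, u a y' s)
        (∫ y' in (0:ℝ)..y, Pd eX (F3 u) (a,y',s)) a := by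
      intro a
      exact hasDerivAt_parint
        (A := fun q => u q.1 q.2 s) (A' := fun q => Pd eX (F3 u) (q.1,q.2,s))
        (fun p => hasDerivAt_sliceX (hsm.diffAt (p := (p.1,p.2,s)) hs))
        ((hsm.pd eX).contXY hs) (fun a => (hsm.contXY hs).sliceL a) y a
    have hv1 : ∀ a : ℝ, HasDerivAt (fun a => ∫ y' in (0:ℝ)..y, Pd eX (F3 u) (a,y',s))
        (∫ y' in (0:ℝ)..y, Pd eX (Pd eX (F3 u)) (a,y',s)) a := by
      intro a
      exact hasDerivAt_parint
        (A := fun q => Pd eX (F3 u) (q.1,q.2,s))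
        (A' := fun q => Pd eX (Pd eX (F3 u)) (q.1,q.2,s))
        (fun p => hasDerivAt_sliceX ((hsm.pd eX).diffAt (p := (p.1,p.2,s)) hs))
        (((hsm.pd eX).pd eX).contXY hs) (fun a => ((hsm.pd eX).contXY hs).sliceL a) y a
    have hv2 : ∀ a : ℝ, HasDerivAt (fun a => ∫ y' in (0:ℝ)..y, Pd eX (Pd eX (F3 u)) (a,y',s))
        (∫ y' in (0:ℝ)..y, Pd eX (Pd eX (Pd eX (F3 u))) (a,y',s)) a := by
      intro a
      exact hasDerivAt_parint
        (A := fun q => Pd eX (Pd eX (F3 u)) (q.1,q.2,s))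
        (A' := fun q => Pd eX (Pd eX (Pd eX (F3 u))) (q.1,q.2,s))
        (fun p => hasDerivAt_sliceX (((hsm.pd eX).pd eX).diffAt (p := (p.1,p.2,s)) hs))
        ((((hsm.pd eX).pd eX).pd eX).contXY hs)
        (fun a => (((hsm.pd eX).pd eX).contXY hs).sliceL a) y a
    -- periodicity
    have hfxper : ∀ y' x : ℝ, Pd eX (F3 u) (x + 2*π, y', s) = Pd eX (F3 u) (x, y', s) :=
      fun y' => per_pdX hsm hs (fun a => hper a y' s)
    have hfxxper : ∀ y' x : ℝ, Pd eX (Pd eX (F3 u)) (x + 2*π, y', s)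
        = Pd eX (Pd eX (F3 u)) (x, y', s) :=
      fun y' => per_pdX (hsm.pd eX) hs (fun a => hfxper y' a)
    have h2pi : (2*π : ℝ) = 0 + 2*π := by ring
    have vper : (∫ y' in (0:ℝ)..y, u (2*π) y' s) = ∫ y' in (0:ℝ)..y, u 0 y' s := by
      rw [h2pi]; simp only [hper]
    have v1per : (∫ y' in (0:ℝ)..y, Pd eX (F3 u) (2*π,y',s))
        = ∫ y' in (0:ℝ)..y, Pd eX (F3 u) (0,y',s) := by
      rw [h2pi]; simp only [hfxper]
    have v2per : (∫ y' in (0:ℝ)..y, Pd eX (Pd eX (F3 u)) (2*π,y',s))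
        = ∫ y' in (0:ℝ)..y, Pd eX (Pd eX (F3 u)) (0,y',s) := by
      rw [h2pi]; simp only [hfxxper]
    -- continuity of the x-functions
    have cv : Continuous fun a : ℝ => ∫ y' in (0:ℝ)..y, u a y' s :=
      cont_of_hasDerivAt fun a => hv a
    have cv1 : Continuous fun a : ℝ => ∫ y' in (0:ℝ)..y, Pd eX (F3 u) (a,y',s) :=
      cont_of_hasDerivAt fun a => hv1 a
    have cv2 : Continuous fun a : ℝ => ∫ y' in (0:ℝ)..y, Pd eX (Pd eX (F3 u)) (a,y',s) :=
      cont_of_hasDerivAt fun a => hv2 a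
    have cw : Continuous fun a : ℝ => ∫ y' in (0:ℝ)..y, Pd eX (Pd eX (Pd eX (F3 u))) (a,y',s) :=
      cont_of_hasDerivAt fun a => hasDerivAt_parint
        (A := fun q => Pd eX (Pd eX (Pd eX (F3 u))) (q.1,q.2,s))
        (A' := fun q => Pd eX (Pd eX (Pd eX (Pd eX (F3 u)))) (q.1,q.2,s))
        (fun p => hasDerivAt_sliceX ((((hsm.pd eX).pd eX).pd eX).diffAt (p := (p.1,p.2,s)) hs))
        (((((hsm.pd eX).pd eX).pd eX).pd eX).contXY hs)
        (fun a => ((((hsm.pd eX).pd eX).pd eX).contXY hs).sliceL a) y a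
    -- integration by parts
    have ibp := intervalIntegral.integral_mul_deriv_eq_deriv_mul (a := 0) (b := 2*π)
      (u := fun a => ∫ y' in (0:ℝ)..y, u a y' s)
      (u' := fun a => ∫ y' in (0:ℝ)..y, Pd eX (F3 u) (a,y',s))
      (v := fun a => ∫ y' in (0:ℝ)..y, Pd eX (Pd eX (F3 u)) (a,y',s))
      (v' := fun a => ∫ y' in (0:ℝ)..y, Pd eX (Pd eX (Pd eX (F3 u))) (a,y',s))
      (fun a _ => hv a) (fun a _ => hv2 a)
      (cv1.intervalIntegrable _ _) (cw.intervalIntegrable _ _)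
    beta_reduce at ibp
    -- middle integral vanishes
    have key : ∀ a ∈ Set.uIcc (0:ℝ) (2*π), HasDerivAt
        (fun b => (1/2 : ℝ) * (∫ y' in (0:ℝ)..y, Pd eX (F3 u) (b,y',s))^2)
        ((∫ y' in (0:ℝ)..y, Pd eX (F3 u) (a,y',s))
          * (∫ y' in (0:ℝ)..y, Pd eX (Pd eX (F3 u)) (a,y',s))) a := by
      intro a _
      have h1 := ((hv1 a).pow 2).const_mul ((1:ℝ)/2)
      refine h1.congr_deriv ?_
      push_cast; ring
    have hmid : (∫ a in (0:ℝ)..2*π,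
        (∫ y' in (0:ℝ)..y, Pd eX (F3 u) (a,y',s))
          * (∫ y' in (0:ℝ)..y, Pd eX (Pd eX (F3 u)) (a,y',s))) = 0 := by
      rw [intervalIntegral.integral_eq_sub_of_hasDerivAt key
        ((cv1.mul cv2).intervalIntegrable _ _)]
      rw [v1per]; ring
    rw [hmid, vper, v2per] at ibp
    rw [ibp]; ring
  simp only [hzero, intervalIntegral.integral_zero]

theorem spatial (hsm : SmU T (F3 u))
    (hper : ∀ x y t, u (x + 2*π) y t = u x y t)
    (hbc0 : ∀ x t, t ∈ Set.Icc 0 T →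
      deriv (fun y => u x y t) 0 = 0 ∧ deriv (fun y => u x y t) π = 0)
    (hbc3 : ∀ x t, t ∈ Set.Icc 0 T →
      iteratedDeriv 3 (fun y => u x y t) 0 = 0 ∧
      iteratedDeriv 3 (fun y => u x y t) π = 0)
    (havg : ∀ x t, t ∈ Set.Icc 0 T → ∫ y in (0:ℝ)..π, u x y t = 0)
    (hpde : ∀ x y t, t ∈ Set.Icc 0 T →
      deriv (fun t' => iteratedDeriv 2 (fun y' => u x y' t') y) t
        - γ * iteratedDeriv 3 (fun x' => u x' y t) x
        - α * iteratedDeriv 4 (fun y' => u x y' t) y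
        - β * iteratedDeriv 2 (fun y' => u x y' t) y
        + iteratedDeriv 2 (fun y' => deriv (fun x' => (u x' y' t)^2) x) y = 0)
    {s : ℝ} (hs : s ∈ Set.Ioo 0 T) :
    (∫ x in (0:ℝ)..2*π, ∫ y in (0:ℝ)..π, u x y s * Pd eT (F3 u) (x,y,s))
      = β * (∫ x in (0:ℝ)..2*π, ∫ y in (0:ℝ)..π, (u x y s)^2)
        - α * (∫ x in (0:ℝ)..2*π, ∫ y in (0:ℝ)..π, (Pd eY (F3 u) (x,y,s))^2) := by
  have h2 := step2 hsm hbc0 hbc3 havg hpde hs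
  -- continuity in x of the inner integrals
  have cA : Continuous fun x => ∫ y in (0:ℝ)..π, u x y s * Pd eT (F3 u) (x,y,s) :=
    continuous_parametric_intervalIntegral_of_continuous'
      (f := fun x y => u x y s * Pd eT (F3 u) (x,y,s))
      ((hsm.contXY hs).mul ((hsm.pd eT).contXY hs)) 0 π
  have cB : Continuous fun x => ∫ y in (0:ℝ)..π,
      (∫ y' in (0:ℝ)..y, u x y' s)
        * (∫ y' in (0:ℝ)..y, Pd eX (Pd eX (Pd eX (F3 u))) (x,y',s)) := by
    have c1 : Continuous fun q : ℝ × ℝ => ∫ y' in (0:ℝ)..q.2, u q.1 y' s :=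
      continuous_parametric_primitive_of_continuous (f := fun x y' => u x y' s)
        (hsm.contXY hs)
    have c2 : Continuous fun q : ℝ × ℝ =>
        ∫ y' in (0:ℝ)..q.2, Pd eX (Pd eX (Pd eX (F3 u))) (q.1,y',s) :=
      continuous_parametric_primitive_of_continuous
        (f := fun x y' => Pd eX (Pd eX (Pd eX (F3 u))) (x,y',s))
        ((((hsm.pd eX).pd eX).pd eX).contXY hs)
    exact continuous_parametric_intervalIntegral_of_continuous'
      (f := fun x y => (∫ y' in (0:ℝ)..y, u x y' s)
        * (∫ y' in (0:ℝ)..y, Pd eX (Pd eX (Pd eX (F3 u))) (x,y',s)))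
      (c1.mul c2) 0 π
  have cC : Continuous fun x => ∫ y in (0:ℝ)..π, (Pd eY (F3 u) (x,y,s))^2 :=
    continuous_parametric_intervalIntegral_of_continuous'
      (f := fun x y => (Pd eY (F3 u) (x,y,s))^2)
      (((hsm.pd eY).contXY hs).fun_pow 2) 0 π
  have cD : Continuous fun x => ∫ y in (0:ℝ)..π, (u x y s)^2 :=
    continuous_parametric_intervalIntegral_of_continuous'
      (f := fun x y => (u x y s)^2) ((hsm.contXY hs).fun_pow 2) 0 π
  have cE : Continuous fun x => ∫ y in (0:ℝ)..π,
      u x y s * Pd eX (fun p => F3 u p ^ 2) (x,y,s) :=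
    continuous_parametric_intervalIntegral_of_continuous'
      (f := fun x y => u x y s * Pd eX (fun p => F3 u p ^ 2) (x,y,s))
      ((hsm.contXY hs).mul (((SmU.sq hsm).pd eX).contXY hs)) 0 π
  -- integrate step2 over x
  have hxint : (∫ x in (0:ℝ)..2*π, -(∫ y in (0:ℝ)..π, u x y s * Pd eT (F3 u) (x,y,s)))
      = ∫ x in (0:ℝ)..2*π,
          (γ * (∫ y in (0:ℝ)..π, (∫ y' in (0:ℝ)..y, u x y' s)
              * (∫ y' in (0:ℝ)..y, Pd eX (Pd eX (Pd eX (F3 u))) (x,y',s)))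
            + α * (∫ y in (0:ℝ)..π, (Pd eY (F3 u) (x,y,s))^2)
            - β * (∫ y in (0:ℝ)..π, (u x y s)^2)
            + (∫ y in (0:ℝ)..π, u x y s * Pd eX (fun p => F3 u p ^ 2) (x,y,s))) := by
    apply intervalIntegral.integral_congr
    intro x _
    exact h2 x
  rw [intervalIntegral.integral_neg] at hxint
  have iB := (cB.intervalIntegrable (μ := volume) 0 (2*π)).const_mul γ
  have iC := (cC.intervalIntegrable (μ := volume) 0 (2*π)).const_mul α
  have iD := (cD.intervalIntegrable (μ := volume) 0 (2*π)).const_mul β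
  have iE := cE.intervalIntegrable (μ := volume) 0 (2*π)
  rw [intervalIntegral.integral_add (((iB.add iC)).sub iD) iE,
    intervalIntegral.integral_sub (iB.add iC) iD,
    intervalIntegral.integral_add iB iC,
    intervalIntegral.integral_const_mul, intervalIntegral.integral_const_mul,
    intervalIntegral.integral_const_mul] at hxint
  rw [vanishing1 hsm hper hs, vanishing2 hsm hper hs] at hxint
  linarith [hxint]

end Spatial

section TimePart
variable {u : ℝ → ℝ → ℝ → ℝ} {T γ α β : ℝ}

def clampT (T s : ℝ) : ℝ := min (max s 0) T
def Svol (T : ℝ) : Set (ℝ × ℝ × ℝ) := Set.univ ×ˢ Set.univ ×ˢ Set.Icc 0 T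
def gW (u : ℝ → ℝ → ℝ → ℝ) (T : ℝ) : ℝ × ℝ × ℝ → ℝ :=
  fun p => fderivWithin ℝ (F3 u) (Svol T) p (0,0,1)
def fyW (u : ℝ → ℝ → ℝ → ℝ) (T : ℝ) : ℝ × ℝ × ℝ → ℝ :=
  fun p => fderivWithin ℝ (F3 u) (Svol T) p (0,1,0)
def uc (u : ℝ → ℝ → ℝ → ℝ) (T : ℝ) : ℝ × ℝ × ℝ → ℝ :=
  fun p => u p.1 p.2.1 (clampT T p.2.2)
def gc (u : ℝ → ℝ → ℝ → ℝ) (T : ℝ) : ℝ × ℝ × ℝ → ℝ :=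
  fun p => gW u T (p.1, p.2.1, clampT T p.2.2)
def fyc (u : ℝ → ℝ → ℝ → ℝ) (T : ℝ) : ℝ × ℝ × ℝ → ℝ :=
  fun p => fyW u T (p.1, p.2.1, clampT T p.2.2)
noncomputable def Fc (u : ℝ → ℝ → ℝ → ℝ) (T : ℝ) : ℝ → ℝ :=
  fun r => ∫ x in (0:ℝ)..2*π, ∫ y in (0:ℝ)..π, (uc u T (x,y,r))^2
noncomputable def Gc (u : ℝ → ℝ → ℝ → ℝ) (T : ℝ) : ℝ → ℝ :=
  fun r => ∫ x in (0:ℝ)..2*π, ∫ y in (0:ℝ)..π, (fyc u T (x,y,r))^2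

theorem clampT_mem (hT : 0 ≤ T) (s : ℝ) : clampT T s ∈ Set.Icc 0 T := by
  constructor
  · exact le_min (le_max_right s 0) hT
  · exact min_le_right _ _

theorem clampT_id {s : ℝ} (hs : s ∈ Set.Icc 0 T) : clampT T s = s := by
  unfold clampT
  rw [max_eq_left hs.1, min_eq_left hs.2]

theorem clampT_cont : Continuous (clampT T) := by
  unfold clampT; fun_prop

theorem mem_Svol {p : ℝ × ℝ × ℝ} (hp : p.2.2 ∈ Set.Icc 0 T) : p ∈ Svol T := by
  simp [Svol, Set.mem_prod, hp]

theorem Svol_uniqueDiff (hT : 0 < T) : UniqueDiffOn ℝ (Svol T) := by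
  apply uniqueDiffOn_convex
  · exact convex_univ.prod (convex_univ.prod (convex_Icc 0 T))
  · rw [Svol, interior_prod_eq, interior_prod_eq, interior_univ, interior_Icc]
    exact ⟨(0, 0, T/2), trivial, trivial, by constructor <;> linarith⟩

theorem smU_of_contDiffOn
    (hsmooth : ContDiffOn ℝ (⊤ : ℕ∞) (F3 u) (Svol T)) : SmU T (F3 u) := by
  intro p hp
  apply hsmooth.contDiffAt
  rw [mem_nhds_iff]
  refine ⟨Set.univ ×ˢ Set.univ ×ˢ Set.Ioo 0 T, ?_, ?_, ?_⟩
  · intro q hq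
    exact mem_Svol (Set.Ioo_subset_Icc_self hq.2.2)
  · exact isOpen_univ.prod (isOpen_univ.prod isOpen_Ioo)
  · simp [Set.mem_prod, hp]

theorem gW_contOn (hT : 0 < T) (hsmooth : ContDiffOn ℝ (⊤ : ℕ∞) (F3 u) (Svol T)) :
    ContinuousOn (gW u T) (Svol T) :=
  ((hsmooth.fderivWithin (m := 1) (Svol_uniqueDiff hT) (by exact WithTop.coe_le_coe.mpr le_top)).clm_apply
    contDiffOn_const).continuousOn

theorem fyW_contOn (hT : 0 < T) (hsmooth : ContDiffOn ℝ (⊤ : ℕ∞) (F3 u) (Svol T)) :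
    ContinuousOn (fyW u T) (Svol T) :=
  ((hsmooth.fderivWithin (m := 1) (Svol_uniqueDiff hT) (by exact WithTop.coe_le_coe.mpr le_top)).clm_apply
    contDiffOn_const).continuousOn

theorem comp_clamp_cont {K : ℝ × ℝ × ℝ → ℝ} (hT : 0 ≤ T)
    (hK : ContinuousOn K (Svol T)) :
    Continuous fun p : ℝ × ℝ × ℝ => K (p.1, p.2.1, clampT T p.2.2) := by
  have hm : Continuous fun p : ℝ × ℝ × ℝ => (p.1, p.2.1, clampT T p.2.2) := by
    refine continuous_fst.prodMk ((continuous_fst.comp continuous_snd).prodMk ?_)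
    exact clampT_cont.comp (continuous_snd.comp continuous_snd)
  exact hK.comp_continuous hm fun p => mem_Svol (clampT_mem hT _)

theorem uc_cont (hT : 0 ≤ T) (hsmooth : ContDiffOn ℝ (⊤ : ℕ∞) (F3 u) (Svol T)) :
    Continuous (uc u T) := comp_clamp_cont hT hsmooth.continuousOn

theorem gc_cont (hT : 0 < T) (hsmooth : ContDiffOn ℝ (⊤ : ℕ∞) (F3 u) (Svol T)) :
    Continuous (gc u T) := comp_clamp_cont hT.le (gW_contOn hT hsmooth)

theorem fyc_cont (hT : 0 < T) (hsmooth : ContDiffOn ℝ (⊤ : ℕ∞) (F3 u) (Svol T)) :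
    Continuous (fyc u T) := comp_clamp_cont hT.le (fyW_contOn hT hsmooth)

theorem uc_id {x y s : ℝ} (hs : s ∈ Set.Icc 0 T) : uc u T (x,y,s) = u x y s := by
  unfold uc; rw [clampT_id hs]

theorem gW_int {x y s : ℝ} (hs : s ∈ Set.Ioo 0 T) :
    gW u T (x,y,s) = Pd eT (F3 u) (x,y,s) := by
  unfold gW Pd eT
  rw [fderivWithin_of_mem_nhds]
  rw [mem_nhds_iff]
  refine ⟨Set.univ ×ˢ Set.univ ×ˢ Set.Ioo 0 T, ?_, ?_, ?_⟩
  · intro q hq; exact mem_Svol (Set.Ioo_subset_Icc_self hq.2.2)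
  · exact isOpen_univ.prod (isOpen_univ.prod isOpen_Ioo)
  · simp [Set.mem_prod, hs]

theorem fyW_int {x y s : ℝ} (hs : s ∈ Set.Ioo 0 T) :
    fyW u T (x,y,s) = Pd eY (F3 u) (x,y,s) := by
  unfold fyW Pd eY
  rw [fderivWithin_of_mem_nhds]
  rw [mem_nhds_iff]
  refine ⟨Set.univ ×ˢ Set.univ ×ˢ Set.Ioo 0 T, ?_, ?_, ?_⟩
  · intro q hq; exact mem_Svol (Set.Ioo_subset_Icc_self hq.2.2)
  · exact isOpen_univ.prod (isOpen_univ.prod isOpen_Ioo)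
  · simp [Set.mem_prod, hs]

theorem gc_int {x y s : ℝ} (hs : s ∈ Set.Ioo 0 T) :
    gc u T (x,y,s) = Pd eT (F3 u) (x,y,s) := by
  unfold gc
  rw [clampT_id (Set.Ioo_subset_Icc_self hs)]
  exact gW_int hs

theorem fyc_int {x y s : ℝ} (hs : s ∈ Set.Ioo 0 T) :
    fyc u T (x,y,s) = Pd eY (F3 u) (x,y,s) := by
  unfold fyc
  rw [clampT_id (Set.Ioo_subset_Icc_self hs)]
  exact fyW_int hs

/-- iterated interval integral to product set integral -/
theorem iter_prod {k : ℝ × ℝ → ℝ} (hk : Continuous k) {a b : ℝ} (ha : 0 ≤ a) (hb : 0 ≤ b) :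
    ∫ x in (0:ℝ)..a, ∫ y in (0:ℝ)..b, k (x,y)
      = ∫ p in Set.Ioc 0 a ×ˢ Set.Ioc 0 b, k p ∂(volume.prod volume) := by
  rw [intervalIntegral.integral_of_le ha]
  simp only [intervalIntegral.integral_of_le hb]
  refine (MeasureTheory.setIntegral_prod k ?_).symm
  have : IntegrableOn k (Set.Icc (0:ℝ) a ×ˢ Set.Icc (0:ℝ) b) (volume.prod volume) :=
    (hk.locallyIntegrable).integrableOn_isCompact (isCompact_Icc.prod isCompact_Icc)
  exact this.mono_set (Set.prod_mono Set.Ioc_subset_Icc_self Set.Ioc_subset_Icc_self)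

theorem intOnR {k : ℝ × ℝ → ℝ} (hk : Continuous k) {a b : ℝ} :
    IntegrableOn k (Set.Ioc 0 a ×ˢ Set.Ioc 0 b) (volume.prod volume) := by
  have : IntegrableOn k (Set.Icc (0:ℝ) a ×ˢ Set.Icc (0:ℝ) b) (volume.prod volume) :=
    (hk.locallyIntegrable).integrableOn_isCompact (isCompact_Icc.prod isCompact_Icc)
  exact this.mono_set (Set.prod_mono Set.Ioc_subset_Icc_self Set.Ioc_subset_Icc_self)

theorem Fc_cont (hT : 0 ≤ T) (hsmooth : ContDiffOn ℝ (⊤ : ℕ∞) (F3 u) (Svol T)) :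
    Continuous (Fc u T) := by
  have hu := uc_cont hT hsmooth
  have cinner : Continuous fun q : ℝ × ℝ => ∫ y in (0:ℝ)..π, (uc u T (q.2, y, q.1))^2 :=
    continuous_parametric_intervalIntegral_of_continuous'
      (f := fun (q : ℝ × ℝ) y => (uc u T (q.2, y, q.1))^2)
      (by fun_prop) 0 π
  exact continuous_parametric_intervalIntegral_of_continuous'
    (f := fun (r : ℝ) (x : ℝ) => ∫ y in (0:ℝ)..π, (uc u T (x, y, r))^2)
    (by
      have : Continuous fun q : ℝ × ℝ => ∫ y in (0:ℝ)..π, (uc u T (q.2, y, q.1))^2 := cinner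
      exact this) 0 (2*π)

theorem Gc_cont (hT : 0 < T) (hsmooth : ContDiffOn ℝ (⊤ : ℕ∞) (F3 u) (Svol T)) :
    Continuous (Gc u T) := by
  have hu := fyc_cont hT hsmooth
  have cinner : Continuous fun q : ℝ × ℝ => ∫ y in (0:ℝ)..π, (fyc u T (q.2, y, q.1))^2 :=
    continuous_parametric_intervalIntegral_of_continuous'
      (f := fun (q : ℝ × ℝ) y => (fyc u T (q.2, y, q.1))^2)
      (by fun_prop) 0 π
  exact continuous_parametric_intervalIntegral_of_continuous'
    (f := fun (r : ℝ) (x : ℝ) => ∫ y in (0:ℝ)..π, (fyc u T (x, y, r))^2)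
    (by
      have : Continuous fun q : ℝ × ℝ => ∫ y in (0:ℝ)..π, (fyc u T (q.2, y, q.1))^2 := cinner
      exact this) 0 (2*π)

end TimePart

section Main
variable {u : ℝ → ℝ → ℝ → ℝ} {T γ α β : ℝ}

theorem time_identity (hT : 0 < T) (hsmooth : ContDiffOn ℝ (⊤ : ℕ∞) (F3 u) (Svol T))
    (hper : ∀ x y t, u (x + 2*π) y t = u x y t)
    (hbc0 : ∀ x t, t ∈ Set.Icc 0 T →
      deriv (fun y => u x y t) 0 = 0 ∧ deriv (fun y => u x y t) π = 0)
    (hbc3 : ∀ x t, t ∈ Set.Icc 0 T →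
      iteratedDeriv 3 (fun y => u x y t) 0 = 0 ∧
      iteratedDeriv 3 (fun y => u x y t) π = 0)
    (havg : ∀ x t, t ∈ Set.Icc 0 T → ∫ y in (0:ℝ)..π, u x y t = 0)
    (hpde : ∀ x y t, t ∈ Set.Icc 0 T →
      deriv (fun t' => iteratedDeriv 2 (fun y' => u x y' t') y) t
        - γ * iteratedDeriv 3 (fun x' => u x' y t) x
        - α * iteratedDeriv 4 (fun y' => u x y' t) y
        - β * iteratedDeriv 2 (fun y' => u x y' t) y
        + iteratedDeriv 2 (fun y' => deriv (fun x' => (u x' y' t)^2) x) y = 0) :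
    ∀ t ∈ Set.Icc 0 T,
      Fc u T t - Fc u T 0 = ∫ r in (0:ℝ)..t, (2*β * Fc u T r - 2*α * Gc u T r) := by
  intro t ht
  have hsm : SmU T (F3 u) := smU_of_contDiffOn hsmooth
  have hucont := uc_cont hT.le hsmooth
  have hgcont := gc_cont hT hsmooth
  have hfycont := fyc_cont hT hsmooth
  have hemb : ∀ r : ℝ, Continuous fun q : ℝ × ℝ => ((q.1, q.2, r) : ℝ × ℝ × ℝ) := by
    intro r; fun_prop
  have hembT : ∀ q : ℝ × ℝ, Continuous fun r : ℝ => ((q.1, q.2, r) : ℝ × ℝ × ℝ) := by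
    intro q; fun_prop
  -- Step A: convert to product integral
  have hFt : Fc u T t = ∫ p in Set.Ioc 0 (2*π) ×ˢ Set.Ioc 0 π,
      (uc u T (p.1, p.2, t))^2 ∂(volume.prod volume) :=
    iter_prod (k := fun q => (uc u T (q.1, q.2, t))^2)
      ((hucont.comp (hemb t)).pow 2) (by positivity) (by positivity)
  have hF0 : Fc u T 0 = ∫ p in Set.Ioc 0 (2*π) ×ˢ Set.Ioc 0 π,
      (uc u T (p.1, p.2, 0))^2 ∂(volume.prod volume) :=
    iter_prod (k := fun q => (uc u T (q.1, q.2, 0))^2)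
      ((hucont.comp (hemb 0)).pow 2) (by positivity) (by positivity)
  have hsub : Fc u T t - Fc u T 0 = ∫ p in Set.Ioc 0 (2*π) ×ˢ Set.Ioc 0 π,
      ((uc u T (p.1, p.2, t))^2 - (uc u T (p.1, p.2, 0))^2) ∂(volume.prod volume) := by
    rw [hFt, hF0]
    exact (MeasureTheory.integral_sub (intOnR ((hucont.comp (hemb t)).pow 2))
      (intOnR ((hucont.comp (hemb 0)).pow 2))).symm
  -- Step B: FTC in time, pointwise
  have hB : ∀ p : ℝ × ℝ, (uc u T (p.1, p.2, t))^2 - (uc u T (p.1, p.2, 0))^2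
      = ∫ r in (0:ℝ)..t, 2 * uc u T (p.1, p.2, r) * gc u T (p.1, p.2, r) := by
    intro p
    have hcont : ContinuousOn (fun r => (uc u T (p.1, p.2, r))^2) (Set.Icc 0 t) :=
      ((hucont.comp (hembT p)).pow 2).continuousOn
    have hderiv : ∀ r ∈ Set.Ioo 0 t, HasDerivAt (fun r => (uc u T (p.1, p.2, r))^2)
        (2 * uc u T (p.1, p.2, r) * gc u T (p.1, p.2, r)) r := by
      intro r hr
      have hrT : r ∈ Set.Ioo 0 T := ⟨hr.1, lt_of_lt_of_le hr.2 ht.2⟩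
      have hev : (fun r' => (uc u T (p.1, p.2, r'))^2) =ᶠ[nhds r]
          (fun r' => (u p.1 p.2 r')^2) := by
        filter_upwards [isOpen_Ioo.mem_nhds hrT] with r' hr'
        rw [uc_id (Set.Ioo_subset_Icc_self hr')]
      have hbase : HasDerivAt (fun r' => (u p.1 p.2 r')^2)
          ((2:ℕ) * (u p.1 p.2 r)^(2-1) * Pd eT (F3 u) (p.1, p.2, r)) r :=
        (hasDerivAt_sliceT (hsm.diffAt (p := (p.1, p.2, r)) hrT)).pow 2
      have h1 := hbase.congr_of_eventuallyEq hev
      refine h1.congr_deriv ?_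
      rw [uc_id (Set.mem_Icc.mpr ⟨hr.1.le, hr.2.le.trans ht.2⟩), gc_int hrT]
      push_cast; ring
    have hint : IntervalIntegrable
        (fun r => 2 * uc u T (p.1, p.2, r) * gc u T (p.1, p.2, r)) volume 0 t :=
      ((continuous_const.mul (hucont.comp (hembT p))).mul
        (hgcont.comp (hembT p))).intervalIntegrable _ _
    exact (intervalIntegral.integral_eq_sub_of_hasDerivAt_of_le ht.1 hcont hderiv hint).symm
  have hC : (∫ p in Set.Ioc 0 (2*π) ×ˢ Set.Ioc 0 π,
        ((uc u T (p.1, p.2, t))^2 - (uc u T (p.1, p.2, 0))^2) ∂(volume.prod volume))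
      = ∫ p in Set.Ioc 0 (2*π) ×ˢ Set.Ioc 0 π,
        (∫ r in (0:ℝ)..t, 2 * uc u T (p.1, p.2, r) * gc u T (p.1, p.2, r))
          ∂(volume.prod volume) := by
    have := funext hB
    rw [show (fun p : ℝ × ℝ => (uc u T (p.1, p.2, t))^2 - (uc u T (p.1, p.2, 0))^2)
      = fun p : ℝ × ℝ => ∫ r in (0:ℝ)..t,
          2 * uc u T (p.1, p.2, r) * gc u T (p.1, p.2, r) from funext hB]
  -- Step D: Fubini
  have hD : (∫ p in Set.Ioc 0 (2*π) ×ˢ Set.Ioc 0 π,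
        (∫ r in (0:ℝ)..t, 2 * uc u T (p.1, p.2, r) * gc u T (p.1, p.2, r))
          ∂(volume.prod volume))
      = ∫ r in (0:ℝ)..t, (∫ p in Set.Ioc 0 (2*π) ×ˢ Set.Ioc 0 π,
          2 * uc u T (p.1, p.2, r) * gc u T (p.1, p.2, r) ∂(volume.prod volume)) := by
    simp only [intervalIntegral.integral_of_le ht.1]
    apply MeasureTheory.integral_integral_swap
    rw [Measure.prod_restrict]
    have hcont : Continuous fun z : (ℝ × ℝ) × ℝ =>
        2 * uc u T (z.1.1, z.1.2, z.2) * gc u T (z.1.1, z.1.2, z.2) := by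
      have hm : Continuous fun z : (ℝ × ℝ) × ℝ => ((z.1.1, z.1.2, z.2) : ℝ × ℝ × ℝ) := by
        fun_prop
      exact (continuous_const.mul (hucont.comp hm)).mul (hgcont.comp hm)
    have hK : IsCompact ((Set.Icc (0:ℝ) (2*π) ×ˢ Set.Icc (0:ℝ) π) ×ˢ Set.Icc (0:ℝ) t) :=
      (isCompact_Icc.prod isCompact_Icc).prod isCompact_Icc
    exact ((hcont.locallyIntegrable).integrableOn_isCompact hK).mono_set
      (Set.prod_mono (Set.prod_mono Set.Ioc_subset_Icc_self Set.Ioc_subset_Icc_self)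
        Set.Ioc_subset_Icc_self)
  -- Step E: the spatial identity at interior times
  have hE : ∀ r ∈ Set.Ioo 0 t, (∫ p in Set.Ioc 0 (2*π) ×ˢ Set.Ioc 0 π,
      2 * uc u T (p.1, p.2, r) * gc u T (p.1, p.2, r) ∂(volume.prod volume))
      = 2*β * Fc u T r - 2*α * Gc u T r := by
    intro r hr
    have hrT : r ∈ Set.Ioo 0 T := ⟨hr.1, lt_of_lt_of_le hr.2 ht.2⟩
    have h1 : (∫ p in Set.Ioc 0 (2*π) ×ˢ Set.Ioc 0 π,
        2 * uc u T (p.1, p.2, r) * gc u T (p.1, p.2, r) ∂(volume.prod volume))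
        = ∫ x in (0:ℝ)..2*π, ∫ y in (0:ℝ)..π, 2 * uc u T (x, y, r) * gc u T (x, y, r) :=
      (iter_prod (k := fun q => 2 * uc u T (q.1, q.2, r) * gc u T (q.1, q.2, r))
        ((continuous_const.mul (hucont.comp (hemb r))).mul (hgcont.comp (hemb r)))
        (by positivity) (by positivity)).symm
    rw [h1]
    have h2 : (∫ x in (0:ℝ)..2*π, ∫ y in (0:ℝ)..π, 2 * uc u T (x, y, r) * gc u T (x, y, r))
        = ∫ x in (0:ℝ)..2*π, ∫ y in (0:ℝ)..π,
            2 * (u x y r * Pd eT (F3 u) (x, y, r)) := by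
      apply intervalIntegral.integral_congr; intro x _
      apply intervalIntegral.integral_congr; intro y _
      beta_reduce
      rw [uc_id ⟨hrT.1.le, hrT.2.le⟩, gc_int hrT]; ring
    rw [h2]
    simp only [intervalIntegral.integral_const_mul]
    rw [spatial hsm hper hbc0 hbc3 havg hpde hrT]
    have hFr : Fc u T r = ∫ x in (0:ℝ)..2*π, ∫ y in (0:ℝ)..π, (u x y r)^2 := by
      apply intervalIntegral.integral_congr; intro x _
      apply intervalIntegral.integral_congr; intro y _
      beta_reduce
      rw [uc_id ⟨hrT.1.le, hrT.2.le⟩]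
    have hGr : Gc u T r = ∫ x in (0:ℝ)..2*π, ∫ y in (0:ℝ)..π, (Pd eY (F3 u) (x,y,r))^2 := by
      apply intervalIntegral.integral_congr; intro x _
      apply intervalIntegral.integral_congr; intro y _
      beta_reduce
      rw [fyc_int hrT]
    rw [hFr, hGr]; ring
  -- Step F: a.e. congruence
  have hF : (∫ r in (0:ℝ)..t, (∫ p in Set.Ioc 0 (2*π) ×ˢ Set.Ioc 0 π,
      2 * uc u T (p.1, p.2, r) * gc u T (p.1, p.2, r) ∂(volume.prod volume)))
      = ∫ r in (0:ℝ)..t, (2*β * Fc u T r - 2*α * Gc u T r) := by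
    apply intervalIntegral.integral_congr_ae
    have hne : ∀ᵐ r : ℝ, r ≠ t := by
      rw [ae_iff]
      have : {a : ℝ | ¬ a ≠ t} = {t} := by ext a; simp
      rw [this]
      exact Real.volume_singleton
    filter_upwards [hne] with r hrne hrmem
    rw [Set.uIoc_of_le ht.1] at hrmem
    exact hE r ⟨hrmem.1, lt_of_le_of_ne hrmem.2 hrne⟩
  rw [hsub, hC, hD, hF]

end Main

end HallAux

open MeasureTheory Real intervalIntegral

theorem stmt_9 (γ α β T : ℝ) (hT : 0 ≤ T) (u : ℝ → ℝ → ℝ → ℝ)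
    (hsmooth : ContDiffOn ℝ (⊤ : ℕ∞) (fun p : ℝ × ℝ × ℝ => u p.1 p.2.1 p.2.2)
      (Set.univ ×ˢ Set.univ ×ˢ Set.Icc 0 T))
    (hper : ∀ x y t, u (x + 2*π) y t = u x y t)
    (hbc0 : ∀ x t, t ∈ Set.Icc 0 T →
      deriv (fun y => u x y t) 0 = 0 ∧ deriv (fun y => u x y t) π = 0)
    (hbc3 : ∀ x t, t ∈ Set.Icc 0 T →
      iteratedDeriv 3 (fun y => u x y t) 0 = 0 ∧
      iteratedDeriv 3 (fun y => u x y t) π = 0)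
    (havg : ∀ x t, t ∈ Set.Icc 0 T → ∫ y in (0:ℝ)..π, u x y t = 0)
    (hpde : ∀ x y t, t ∈ Set.Icc 0 T →
      deriv (fun t' => iteratedDeriv 2 (fun y' => u x y' t') y) t
        - γ * iteratedDeriv 3 (fun x' => u x' y t) x
        - α * iteratedDeriv 4 (fun y' => u x y' t) y
        - β * iteratedDeriv 2 (fun y' => u x y' t) y
        + iteratedDeriv 2 (fun y' => deriv (fun x' => (u x' y' t)^2) x) y = 0) :
    ∀ t ∈ Set.Icc 0 T,
      (1/2) * (∫ x in (0:ℝ)..(2*π), ∫ y in (0:ℝ)..π, (u x y t)^2)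
        + α * ∫ s in (0:ℝ)..t, ∫ x in (0:ℝ)..(2*π), ∫ y in (0:ℝ)..π,
            (deriv (fun y' => u x y' s) y)^2
      = (1/2) * (∫ x in (0:ℝ)..(2*π), ∫ y in (0:ℝ)..π, (u x y 0)^2)
        + β * ∫ s in (0:ℝ)..t, ∫ x in (0:ℝ)..(2*π), ∫ y in (0:ℝ)..π,
            (u x y s)^2 := by
  intro t ht
  rcases eq_or_lt_of_le hT with hT0 | hTpos
  · -- degenerate case T = 0
    have ht0 : t = 0 := by
      have h1 : t ≤ 0 := by rw [hT0]; exact ht.2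
      exact le_antisymm h1 ht.1
    subst ht0
    rw [intervalIntegral.integral_same, intervalIntegral.integral_same]
    ring
  · have hsmooth' : ContDiffOn ℝ (⊤ : ℕ∞) (F3 u) (Svol T) := hsmooth
    have hsm : SmU T (F3 u) := smU_of_contDiffOn hsmooth'
    have hti := time_identity hTpos hsmooth' hper hbc0 hbc3 havg hpde t ht
    have h0T : (0:ℝ) ∈ Set.Icc 0 T := ⟨le_refl 0, hT⟩
    have hFct : (∫ x in (0:ℝ)..(2*π), ∫ y in (0:ℝ)..π, (u x y t)^2) = Fc u T t := by
      refine (?_ : Fc u T t = _).symm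
      apply intervalIntegral.integral_congr; intro x _
      apply intervalIntegral.integral_congr; intro y _
      beta_reduce
      rw [uc_id ht]
    have hFc0 : (∫ x in (0:ℝ)..(2*π), ∫ y in (0:ℝ)..π, (u x y 0)^2) = Fc u T 0 := by
      refine (?_ : Fc u T 0 = _).symm
      apply intervalIntegral.integral_congr; intro x _
      apply intervalIntegral.integral_congr; intro y _
      beta_reduce
      rw [uc_id h0T]
    have hα : (∫ s in (0:ℝ)..t, ∫ x in (0:ℝ)..(2*π), ∫ y in (0:ℝ)..π,
        (deriv (fun y' => u x y' s) y)^2) = ∫ s in (0:ℝ)..t, Gc u T s := by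
      apply intervalIntegral.integral_congr_ae
      have hne : ∀ᵐ s : ℝ, s ≠ t := by
        rw [ae_iff]
        have h1 : {a : ℝ | ¬ a ≠ t} = {t} := by ext a; simp
        rw [h1]
        exact Real.volume_singleton
      filter_upwards [hne] with s hsne hsmem
      rw [Set.uIoc_of_le ht.1] at hsmem
      have hsT : s ∈ Set.Ioo 0 T :=
        ⟨hsmem.1, lt_of_lt_of_le (lt_of_le_of_ne hsmem.2 hsne) ht.2⟩
      apply intervalIntegral.integral_congr; intro x _
      apply intervalIntegral.integral_congr; intro y _
      beta_reduce
      have hd : deriv (fun y' => u x y' s) y = Pd eY (F3 u) (x,y,s) :=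
        (hasDerivAt_sliceY (hsm.diffAt (p := (x,y,s)) hsT)).deriv
      rw [hd, ← fyc_int hsT]
    have hβ : (∫ s in (0:ℝ)..t, ∫ x in (0:ℝ)..(2*π), ∫ y in (0:ℝ)..π, (u x y s)^2)
        = ∫ s in (0:ℝ)..t, Fc u T s := by
      apply intervalIntegral.integral_congr; intro s hsmem
      have hsI : s ∈ Set.Icc 0 T := by
        rw [Set.uIcc_of_le ht.1] at hsmem
        exact ⟨hsmem.1, hsmem.2.trans ht.2⟩
      apply intervalIntegral.integral_congr; intro x _
      apply intervalIntegral.integral_congr; intro y _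
      beta_reduce
      rw [uc_id hsI]
    rw [hFct, hFc0, hα, hβ]
    have hFi := (Fc_cont hTpos.le hsmooth').intervalIntegrable (μ := volume) 0 t
    have hGi := (Gc_cont hTpos hsmooth').intervalIntegrable (μ := volume) 0 t
    have hsplit : (∫ r in (0:ℝ)..t, (2*β * Fc u T r - 2*α * Gc u T r))
        = 2*β * (∫ r in (0:ℝ)..t, Fc u T r) - 2*α * (∫ r in (0:ℝ)..t, Gc u T r) := by
      rw [intervalIntegral.integral_sub (hFi.const_mul (2*β)) (hGi.const_mul (2*α)),
        intervalIntegral.integral_const_mul, intervalIntegral.integral_const_mul]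
    rw [hsplit] at hti
    linarith
end

section
/- Let $\alpha > 0$, $\gamma \in \mathbb{R}$, $l \in \mathbb{R}$, $n \in \mathbb{Z}\setminus\{0\}$. The Fourier transform (in $t$) of $t \mapsto e^{-\alpha n^2 |t| + i l t}$ equals $\tau \mapsto \frac{2\alpha n^2}{\alpha^2 n^4 + (\tau - l)^2}$, and consequently for any $b$ with $1/2 < b < 3/2$ there is a constant $C$ depending only on $\alpha, b$ such that $\int_{\mathbb{R}} (n^2 + |\tau - l|)^{2b} \left|\mathcal{F}[e^{-\alpha n^2|t| + i l t}](\tau)\right|^2 d\tau \leq C |n|^{4b - 2}$. -/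
/-!
Splitting at `t = 0`, the transform of `exp (-a|t| + w t)` is the sum of two one-sided Laplace
integrals, `1 / (a - w) + 1 / (a + w) = 2a / (a² - w²)`; with `a = α n²` and `w = i (l - τ)` this
is the Poisson kernel. The substitution `τ - l = n² x` then shows that the weighted integral is
exactly `(n²)^(2b - 1) = |n|^(4b - 2)` times an integral independent of `n` and `l`.
-/

open MeasureTheory Real Complex Set

theorem integral_exp_neg_mul_abs_add_mul {a : ℝ} {w : ℂ} (hw : |w.re| < a) :
    ∫ t : ℝ, cexp (-(a * |t|) + w * t) = 2 * a / (a ^ 2 - w ^ 2) := by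
  obtain ⟨hlt, hgt⟩ := abs_lt.mp hw
  have hpos : 0 < (a + w).re := by rw [add_re, ofReal_re]; linarith
  have hneg : (-a + w).re < 0 := by rw [add_re, neg_re, ofReal_re]; linarith
  have hIic : EqOn (fun t : ℝ => cexp (-(a * |t|) + w * t)) (fun t => cexp ((a + w) * t))
      (Iic 0) := fun t ht => by
    dsimp only; rw [abs_of_nonpos (mem_Iic.mp ht)]; congr 1; push_cast; ring
  have hIoi : EqOn (fun t : ℝ => cexp (-(a * |t|) + w * t)) (fun t => cexp ((-a + w) * t))
      (Ioi 0) := fun t ht => by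
    dsimp only; rw [abs_of_pos (mem_Ioi.mp ht)]; congr 1; ring
  rw [← intervalIntegral.integral_Iic_add_Ioi
      ((integrableOn_exp_mul_complex_Iic hpos 0).congr_fun hIic.symm measurableSet_Iic)
      ((integrableOn_exp_mul_complex_Ioi hneg 0).congr_fun hIoi.symm measurableSet_Ioi),
    setIntegral_congr_fun measurableSet_Iic hIic, setIntegral_congr_fun measurableSet_Ioi hIoi,
    integral_exp_mul_complex_Iic hpos, integral_exp_mul_complex_Ioi hneg]
  have h₁ : (a : ℂ) + w ≠ 0 := fun h => by simp [h] at hpos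
  have h₂ : -(a : ℂ) + w ≠ 0 := fun h => by simp [h] at hneg
  have h₃ : (a : ℂ) ^ 2 - w ^ 2 ≠ 0 := by
    rw [sq_sub_sq]; exact mul_ne_zero h₁ fun h => h₂ (by linear_combination -h)
  simp only [ofReal_zero, mul_zero, Complex.exp_zero]
  field_simp
  ring

theorem integral_exp_neg_mul_abs_modulated_fourier {a : ℝ} (ha : 0 < a) (l τ : ℝ) :
    ∫ t : ℝ, cexp (-I * t * τ) * cexp (-(a * |t| : ℝ) + I * l * t) =
      ((2 * a / (a ^ 2 + (τ - l) ^ 2) : ℝ) : ℂ) := by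
  have hw : |(((l - τ : ℝ) : ℂ) * I).re| < a := by simpa using ha
  simp_rw [← Complex.exp_add]
  convert integral_exp_neg_mul_abs_add_mul hw using 3 with t
  · congr 1; push_cast; ring
  · rw [mul_pow, I_sq]; push_cast; ring

theorem integral_add_abs_rpow_mul_sq_poisson_kernel (α b l : ℝ) {s : ℝ} (hs : 0 < s) :
    ∫ τ : ℝ, (s + |τ - l|) ^ (2 * b) * (2 * α * s / (α ^ 2 * s ^ 2 + (τ - l) ^ 2)) ^ 2 =
      s ^ (2 * b - 1) * ∫ x : ℝ, (1 + |x|) ^ (2 * b) * (2 * α / (α ^ 2 + x ^ 2)) ^ 2 := by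
  set g : ℝ → ℝ := fun u => (s + |u|) ^ (2 * b) * (2 * α * s / (α ^ 2 * s ^ 2 + u ^ 2)) ^ 2
  have hg (x : ℝ) :
      g (s * x) = s ^ (2 * b - 2) * ((1 + |x|) ^ (2 * b) * (2 * α / (α ^ 2 + x ^ 2)) ^ 2) := by
    have h₁ : s + |s * x| = s * (1 + |x|) := by rw [abs_mul, abs_of_pos hs]; ring
    have h₂ : α ^ 2 * s ^ 2 + (s * x) ^ 2 = s * (s * (α ^ 2 + x ^ 2)) := by ring
    simp only [g, h₁, h₂, mul_rpow hs.le (by positivity : (0 : ℝ) ≤ 1 + |x|), rpow_sub hs,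
      rpow_two]
    field_simp
  calc ∫ τ : ℝ, g (τ - l) = ∫ u : ℝ, g u := integral_sub_right_eq_self g l
    _ = s * ∫ x : ℝ, g (s * x) := by
      rw [Measure.integral_comp_mul_left, abs_inv, abs_of_pos hs, smul_eq_mul,
        mul_inv_cancel_left₀ hs.ne']
    _ = _ := by
      simp_rw [hg, integral_const_mul]
      rw [← mul_assoc, mul_comm s, ← rpow_add_one hs.ne', show 2 * b - 2 + 1 = 2 * b - 1 by ring]

theorem stmt_11_general (α b : ℝ) (hα : 0 < α) :
    ∃ C > 0, ∀ (n : ℤ) (l : ℝ), n ≠ 0 →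
      (∀ τ : ℝ,
        ∫ t : ℝ, Complex.exp (-Complex.I * t * τ) *
            Complex.exp (-(α * (n:ℝ)^2 * |t| : ℝ) + Complex.I * l * t) =
          ((2 * α * (n:ℝ)^2 / (α^2 * (n:ℝ)^4 + (τ - l)^2) : ℝ) : ℂ)) ∧
      ∫ τ : ℝ, ((n:ℝ)^2 + |τ - l|) ^ (2*b) *
          ‖∫ t : ℝ, Complex.exp (-Complex.I * t * τ) *
              Complex.exp (-(α * (n:ℝ)^2 * |t| : ℝ) + Complex.I * l * t)‖^2 ≤
        C * |(n:ℝ)| ^ (4*b - 2) := by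
  -- Finite exactly when `b < 3/2`; otherwise this and the weighted integral below take the
  -- junk value `0`, and the scaling identity still holds.
  set K := ∫ x : ℝ, (1 + |x|) ^ (2 * b) * (2 * α / (α ^ 2 + x ^ 2)) ^ 2 with hK_def
  have hK : 0 ≤ K := integral_nonneg fun x => by positivity
  refine ⟨K + 1, by linarith, fun n l hn => ?_⟩
  have hs : 0 < (n : ℝ) ^ 2 := by positivity
  have hFT (τ : ℝ) : ∫ t : ℝ, cexp (-I * t * τ) * cexp (-(α * (n:ℝ)^2 * |t| : ℝ) + I * l * t) =
      ((2 * α * (n:ℝ)^2 / (α^2 * (n:ℝ)^4 + (τ - l)^2) : ℝ) : ℂ) := by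
    rw [show α ^ 2 * (n : ℝ) ^ 4 = (α * (n : ℝ) ^ 2) ^ 2 by ring, mul_assoc 2 α]
    exact integral_exp_neg_mul_abs_modulated_fourier (a := α * (n : ℝ) ^ 2) (by positivity) l τ
  refine ⟨hFT, ?_⟩
  have hpow : |(n : ℝ)| ^ (4 * b - 2) = ((n : ℝ) ^ 2) ^ (2 * b - 1) := by
    rw [← sq_abs, ← rpow_natCast, ← rpow_mul (abs_nonneg _)]; congr 1; push_cast; ring
  simp_rw [hFT, norm_real, norm_eq_abs, sq_abs, show (n : ℝ) ^ 4 = ((n : ℝ) ^ 2) ^ 2 by ring,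
    integral_add_abs_rpow_mul_sq_poisson_kernel α b l hs, hpow, ← hK_def, mul_comm _ K]
  gcongr
  linarith

theorem stmt_11 (α b : ℝ) (hα : 0 < α) (hb1 : 1/2 < b) (hb2 : b < 3/2) :
    ∃ C > 0, ∀ (n : ℤ) (l : ℝ), n ≠ 0 →
      (∀ τ : ℝ,
        ∫ t : ℝ, Complex.exp (-Complex.I * t * τ) *
            Complex.exp (-(α * (n:ℝ)^2 * |t| : ℝ) + Complex.I * l * t) =
          ((2 * α * (n:ℝ)^2 / (α^2 * (n:ℝ)^4 + (τ - l)^2) : ℝ) : ℂ)) ∧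
      ∫ τ : ℝ, ((n:ℝ)^2 + |τ - l|) ^ (2*b) *
          ‖∫ t : ℝ, Complex.exp (-Complex.I * t * τ) *
              Complex.exp (-(α * (n:ℝ)^2 * |t| : ℝ) + Complex.I * l * t)‖^2 ≤
        C * |(n:ℝ)| ^ (4*b - 2) :=
  stmt_11_general α b hα
end

section
/- Let $s > 2$, $1/2 < b \leq b' < 1$. Let $m \neq 0$, $n \neq 0$ be integers and $\rho_{m,n} = (|m|+|n|)^{2s}$. Then there is a constant $C$ depending only on $s, b, b'$ such that $\frac{1}{|n|^{4 - 4b' + 4b}} \sum_{\substack{(m',n') : |m'| > \frac{3}{2}|m|, \ n' \neq 0, \ n' \neq n, \ n'/n \geq 1/2}} \frac{m^2 \, \rho_{m,n}}{\rho_{m',n'}\, \rho_{m-m', n-n'}} \leq C$. -/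
/-!
Write `A = |m'| + |n'|` and `B = |m - m'| + |n - n'|`. Since `|m'| > 3|m|/2`, both `A` and `B`
exceed `|m|/2` and are at least `1`, while `A + B ≥ |m| + |n|` puts the larger of them above
`(|m| + |n|)/2`. Hence each summand is at most `2^(4s) (1 + min A B)^(-(2s-2))`, which is dominated
by the sum of two translates of a weight summable over `ℤ²` because `2s - 2 > 2`. The prefactor
`|n|^(-(4 - 4b' + 4b))` is at most `1`.
-/

open Real

lemma summable_one_add_abs_rpow_neg {u : ℝ} (hu : 1 < u) :
    Summable fun x : ℤ => (1 + |(x : ℝ)|) ^ (-u) := by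
  have hnat : Summable fun n : ℕ => (1 + (n : ℝ)) ^ (-u) := by
    simpa [add_comm] using
      (summable_nat_add_iff 1).mpr (Real.summable_nat_rpow.mpr (neg_lt_neg hu))
  exact .of_nat_of_neg (by simpa using hnat) (by simpa using hnat)

lemma summable_one_add_abs_add_abs_rpow_neg {t : ℝ} (ht : 2 < t) :
    Summable fun p : ℤ × ℤ => (1 + |(p.1 : ℝ)| + |(p.2 : ℝ)|) ^ (-t) := by
  have h1 := summable_one_add_abs_rpow_neg (u := t / 2) (by linarith)
  refine .of_nonneg_of_le (fun p => by positivity) (fun p => ?_)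
    (h1.mul_of_nonneg h1 (fun _ => by positivity) (fun _ => by positivity))
  have hpos : 0 < 1 + |(p.1 : ℝ)| + |(p.2 : ℝ)| := by positivity
  calc (1 + |(p.1 : ℝ)| + |(p.2 : ℝ)|) ^ (-t)
      = (1 + |(p.1 : ℝ)| + |(p.2 : ℝ)|) ^ (-(t / 2)) *
          (1 + |(p.1 : ℝ)| + |(p.2 : ℝ)|) ^ (-(t / 2)) := by
        rw [← rpow_add hpos]; ring_nf
    _ ≤ (1 + |(p.1 : ℝ)|) ^ (-(t / 2)) * (1 + |(p.2 : ℝ)|) ^ (-(t / 2)) := by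
        have hneg : -(t / 2) ≤ 0 := by linarith
        exact mul_le_mul
          (rpow_le_rpow_of_nonpos (by positivity) (by simp) hneg)
          (rpow_le_rpow_of_nonpos (by positivity) (by simp) hneg)
          (by positivity) (by positivity)

lemma tsum_le_two_mul_tsum_of_le_add_sub {α : Type*} [AddGroup α] {w F : α → ℝ} (c : α)
    (hw : Summable w) (hF0 : ∀ p, 0 ≤ F p) (hF : ∀ p, F p ≤ w p + w (c - p)) :
    ∑' p, F p ≤ 2 * ∑' p, w p := by
  have hws : Summable fun p => w (c - p) := (Equiv.subLeft c).summable_iff.mpr hw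
  have hwt : ∑' p, w (c - p) = ∑' p, w p := (Equiv.subLeft c).tsum_eq w
  have hmaj := hw.add hws
  calc ∑' p, F p ≤ ∑' p, (w p + w (c - p)) :=
        (Summable.of_nonneg_of_le hF0 hF hmaj).tsum_le_tsum hF hmaj
    _ = 2 * ∑' p, w p := by
        rw [hw.tsum_add hws, hwt]; ring

lemma rpow_neg_le_two_rpow_mul_one_add_rpow_neg {A k : ℝ} (hA : 1 ≤ A) (hk : 0 ≤ k) :
    A ^ (-k) ≤ 2 ^ k * (1 + A) ^ (-k) := by
  have h2A : (2 * A) ^ (-k) ≤ (1 + A) ^ (-k) :=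
    rpow_le_rpow_of_nonpos (by linarith) (by linarith) (by linarith)
  calc A ^ (-k) = 2 ^ k * (2 * A) ^ (-k) := by
        rw [mul_rpow (by norm_num) (by linarith), ← mul_assoc, ← rpow_add (by norm_num)]
        simp
    _ ≤ 2 ^ k * (1 + A) ^ (-k) := by gcongr

lemma sq_mul_rpow_div_le_of_le {M R A B s : ℝ} (hs : 1 ≤ s) (hA : 1 ≤ A) (hAB : A ≤ B)
    (hR0 : 0 ≤ R) (hRB : R ≤ 2 * B) (hMA : |M| ≤ 2 * A) :
    M ^ 2 * R ^ (2 * s) / (A ^ (2 * s) * B ^ (2 * s)) ≤ 2 ^ (4 * s) * (1 + A) ^ (-(2 * s - 2)) := by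
  have hA0 : 0 < A := by linarith
  have hB0 : 0 < B := by linarith
  have hM : M ^ 2 ≤ (2 * A) ^ 2 := sq_le_sq' (abs_le.mp hMA).1 (abs_le.mp hMA).2
  have hsplit : A ^ (2 * s) = A ^ (2 * s - 2) * A ^ 2 := by
    rw [← rpow_natCast, ← rpow_add hA0]; norm_num
  calc M ^ 2 * R ^ (2 * s) / (A ^ (2 * s) * B ^ (2 * s))
      ≤ (2 * A) ^ 2 * (2 * B) ^ (2 * s) / (A ^ (2 * s) * B ^ (2 * s)) := by gcongr
    _ = 2 ^ (2 * s + 2) * A ^ (-(2 * s - 2)) := by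
        rw [mul_rpow (by norm_num) hB0.le, rpow_add (by norm_num), hsplit,
          rpow_neg hA0.le]
        field_simp
        norm_num
    _ ≤ 2 ^ (2 * s + 2) * (2 ^ (2 * s - 2) * (1 + A) ^ (-(2 * s - 2))) := by
        gcongr
        exact rpow_neg_le_two_rpow_mul_one_add_rpow_neg hA (by linarith)
    _ = 2 ^ (4 * s) * (1 + A) ^ (-(2 * s - 2)) := by
        rw [← mul_assoc, ← rpow_add (by norm_num)]; ring_nf

lemma sq_mul_rpow_div_le {M R A B s : ℝ} (hs : 1 ≤ s) (hA : 1 ≤ A) (hB : 1 ≤ B)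
    (hR0 : 0 ≤ R) (hR : R ≤ A + B) (hMA : |M| ≤ 2 * A) (hMB : |M| ≤ 2 * B) :
    M ^ 2 * R ^ (2 * s) / (A ^ (2 * s) * B ^ (2 * s)) ≤
      2 ^ (4 * s) * ((1 + A) ^ (-(2 * s - 2)) + (1 + B) ^ (-(2 * s - 2))) := by
  rcases le_total A B with hAB | hBA
  · refine (sq_mul_rpow_div_le_of_le hs hA hAB hR0 (by linarith) hMA).trans ?_
    gcongr
    exact le_add_of_nonneg_right (by positivity)
  · rw [mul_comm (A ^ (2 * s))]
    refine (sq_mul_rpow_div_le_of_le hs hB hBA hR0 (by linarith) hMB).trans ?_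
    gcongr
    exact le_add_of_nonneg_left (by positivity)

lemma sq_mul_rpow_div_le_of_abs_lt {s : ℝ} (hs : 1 ≤ s) (m n : ℤ) (p : ℤ × ℤ)
    (hp : (3 : ℝ) / 2 * |(m : ℝ)| < |(p.1 : ℝ)|) :
    (m : ℝ) ^ 2 * (|(m : ℝ)| + |(n : ℝ)|) ^ (2 * s) /
        ((|(p.1 : ℝ)| + |(p.2 : ℝ)|) ^ (2 * s) * (|(m : ℝ) - p.1| + |(n : ℝ) - p.2|) ^ (2 * s)) ≤
      2 ^ (4 * s) * ((1 + |(p.1 : ℝ)| + |(p.2 : ℝ)|) ^ (-(2 * s - 2)) +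
        (1 + |(((m, n) - p).1 : ℝ)| + |(((m, n) - p).2 : ℝ)|) ^ (-(2 * s - 2))) := by
  have hm0 := abs_nonneg (m : ℝ)
  have hp1 : 1 ≤ |(p.1 : ℝ)| := by
    have : p.1 ≠ 0 := by rintro h; simp [h] at hp; linarith
    exact_mod_cast Int.one_le_abs this
  have hmp1 : 1 ≤ |(m : ℝ) - p.1| := by
    have : m - p.1 ≠ 0 := by
      rintro h; rw [sub_eq_zero.mp h] at hp; linarith
    exact_mod_cast Int.one_le_abs this
  have hrev : |(p.1 : ℝ)| - |(m : ℝ)| ≤ |(m : ℝ) - p.1| := by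
    simpa [abs_sub_comm] using abs_sub_abs_le_abs_sub (p.1 : ℝ) m
  have htri : |(m : ℝ)| + |(n : ℝ)| ≤ (|(p.1 : ℝ)| + |(p.2 : ℝ)|) +
      (|(m : ℝ) - p.1| + |(n : ℝ) - p.2|) := by
    have h1 := abs_add_le (p.1 : ℝ) (m - p.1)
    have h2 := abs_add_le (p.2 : ℝ) (n - p.2)
    simp only [add_sub_cancel] at h1 h2
    linarith
  have h := sq_mul_rpow_div_le (M := (m : ℝ)) hs (by linarith [abs_nonneg (p.2 : ℝ)])
    (by linarith [abs_nonneg ((n : ℝ) - p.2)]) (by positivity) htri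
    (by linarith [abs_nonneg (p.2 : ℝ)]) (by linarith [abs_nonneg ((n : ℝ) - p.2)])
  simpa [add_assoc] using h

theorem stmt_13_general (s b b' : ℝ) (hs : 2 < s) (hb1 : 1/2 < b) (hb' : b' < 1) :
    ∃ C > 0, ∀ (m n : ℤ), m ≠ 0 → n ≠ 0 →
      (1 / |(n:ℝ)| ^ (4 - 4*b' + 4*b)) *
        ∑' p : ℤ × ℤ,
          (if |p.1| > (3:ℝ)/2 * |(m:ℝ)| ∧ p.2 ≠ 0 ∧ p.2 ≠ n ∧
              (1:ℝ)/2 ≤ (p.2:ℝ)/(n:ℝ) then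
            (m:ℝ)^2 * (|(m:ℝ)| + |(n:ℝ)|) ^ (2*s) /
              ((|(p.1:ℝ)| + |(p.2:ℝ)|) ^ (2*s) *
               (|(m:ℝ) - p.1| + |(n:ℝ) - p.2|) ^ (2*s))
          else 0) ≤ C := by
  set w : ℤ × ℤ → ℝ := fun p => 2 ^ (4 * s) * (1 + |(p.1 : ℝ)| + |(p.2 : ℝ)|) ^ (-(2 * s - 2))
  have hw : Summable w := (summable_one_add_abs_add_abs_rpow_neg (by linarith)).mul_left _
  refine ⟨2 * ∑' p, w p, by linarith [hw.tsum_pos (fun _ => by positivity) 0 (by positivity)],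
    fun m n _ hn => ?_⟩
  have hprefactor : 1 / |(n : ℝ)| ^ (4 - 4 * b' + 4 * b) ≤ 1 :=
    div_le_one_of_le₀ (one_le_rpow (by exact_mod_cast Int.one_le_abs hn) (by linarith))
      (by positivity)
  refine (mul_le_of_le_one_left (tsum_nonneg fun p => ?_) hprefactor).trans
    (tsum_le_two_mul_tsum_of_le_add_sub (m, n) hw (fun p => ?_) fun p => ?_)
  · split_ifs <;> positivity
  · split_ifs <;> positivity
  · split_ifs with hp
    · rw [← mul_add]
      exact sq_mul_rpow_div_le_of_abs_lt (by linarith) m n p (by exact_mod_cast hp.1)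
    · positivity

theorem stmt_13 (s b b' : ℝ) (hs : 2 < s) (hb1 : 1/2 < b) (hbb' : b ≤ b') (hb' : b' < 1) :
    ∃ C > 0, ∀ (m n : ℤ), m ≠ 0 → n ≠ 0 →
      (1 / |(n:ℝ)| ^ (4 - 4*b' + 4*b)) *
        ∑' p : ℤ × ℤ,
          (if |p.1| > (3:ℝ)/2 * |(m:ℝ)| ∧ p.2 ≠ 0 ∧ p.2 ≠ n ∧
              (1:ℝ)/2 ≤ (p.2:ℝ)/(n:ℝ) then
            (m:ℝ)^2 * (|(m:ℝ)| + |(n:ℝ)|) ^ (2*s) /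
              ((|(p.1:ℝ)| + |(p.2:ℝ)|) ^ (2*s) *
               (|(m:ℝ) - p.1| + |(n:ℝ) - p.2|) ^ (2*s))
          else 0) ≤ C :=
  stmt_13_general s b b' hs hb1 hb'
end

section
/- Let $s > 2$, $1/2 < b < 2/3$, $b \leq b' \leq \min\{2b - 1/2, 2/3\}$, and let $m, n$ be integers with $n \neq 0$ and $|m| < |n|^{2 - 2(b' - b)}$. Set $\rho_{m,n} = (|m|+|n|)^{2s}$ and $Q = |n|^{-4 + 4b' - 4b}$ (an upper bound for the resonance weight). Then $\sum_{\substack{(m',n') : n' \neq 0, n' \neq n, n'/n \geq 1/2}} \frac{m^2\, Q\, \rho_{m,n}}{\rho_{m',n'}\,\rho_{m-m',n-n'}} \leq C \frac{m^2}{|n|^{4 - 4(b'-b)}} \leq C$ for a constant $C$ depending only on $s, b, b'$. -/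
open Real

lemma aux_summable_lattice {k : ℝ} (hk : 2 < k) :
    Summable fun q : ℤ × ℤ => ((|(q.1 : ℝ)| + |(q.2 : ℝ)|) ^ k)⁻¹ := by
  have h := EisensteinSeries.summable_one_div_norm_rpow hk
  have h2 : Summable fun q : ℤ × ℤ => ‖(finTwoArrowEquiv ℤ).symm q‖ ^ (-k) :=
    (finTwoArrowEquiv ℤ).symm.summable_iff.mpr h
  refine h2.of_nonneg_of_le (fun q => by positivity) (fun q => ?_)
  have hnorm : ‖(finTwoArrowEquiv ℤ).symm q‖ = max |(q.1 : ℝ)| |(q.2 : ℝ)| := by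
    rw [EisensteinSeries.norm_eq_max_natAbs]
    simp [finTwoArrowEquiv, Nat.cast_natAbs, Nat.cast_max]
  rcases eq_or_ne q 0 with rfl | hq
  · simp [Real.zero_rpow (by positivity : k ≠ 0)]
    positivity
  · have hne : q.1 ≠ 0 ∨ q.2 ≠ 0 := by
      by_contra hc
      push_neg at hc
      exact hq (Prod.ext hc.1 hc.2)
    have hq' : (0:ℝ) < max |(q.1 : ℝ)| |(q.2 : ℝ)| := by
      rcases hne with h1 | h1
      · exact lt_max_of_lt_left (abs_pos.mpr (Int.cast_ne_zero.mpr h1))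
      · exact lt_max_of_lt_right (abs_pos.mpr (Int.cast_ne_zero.mpr h1))
    rw [hnorm, Real.rpow_neg hq'.le]
    have hle : max |(q.1 : ℝ)| |(q.2 : ℝ)| ≤ |(q.1 : ℝ)| + |(q.2 : ℝ)| :=
      max_le (le_add_of_nonneg_right (abs_nonneg _)) (le_add_of_nonneg_left (abs_nonneg _))
    exact inv_anti₀ (Real.rpow_pos_of_pos hq' k) (Real.rpow_le_rpow hq'.le hle (by linarith))

set_option maxHeartbeats 1000000 in
theorem stmt_19 (s b b' : ℝ) (hs : 2 < s) (hb1 : 1/2 < b) (hb2 : b < 2/3)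
    (hbb' : b ≤ b') (hb' : b' ≤ min (2*b - 1/2) (2/3)) :
    ∃ C > 0, ∀ (m n : ℤ), n ≠ 0 → |(m:ℝ)| < |(n:ℝ)| ^ (2 - 2*(b' - b)) →
      (∑' p : ℤ × ℤ,
        (if p.2 ≠ 0 ∧ p.2 ≠ n ∧ (1:ℝ)/2 ≤ (p.2:ℝ)/(n:ℝ) then
          (m:ℝ)^2 * (|(n:ℝ)| ^ (-4 + 4*b' - 4*b)) *
            (|(m:ℝ)| + |(n:ℝ)|) ^ (2*s) /
            ((|(p.1:ℝ)| + |(p.2:ℝ)|) ^ (2*s) *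
             (|(m:ℝ) - p.1| + |(n:ℝ) - p.2|) ^ (2*s))
        else 0) ≤ C * (m:ℝ)^2 / |(n:ℝ)| ^ (4 - 4*(b' - b))) ∧
      (∑' p : ℤ × ℤ,
        (if p.2 ≠ 0 ∧ p.2 ≠ n ∧ (1:ℝ)/2 ≤ (p.2:ℝ)/(n:ℝ) then
          (m:ℝ)^2 * (|(n:ℝ)| ^ (-4 + 4*b' - 4*b)) *
            (|(m:ℝ)| + |(n:ℝ)|) ^ (2*s) /
            ((|(p.1:ℝ)| + |(p.2:ℝ)|) ^ (2*s) *
             (|(m:ℝ) - p.1| + |(n:ℝ) - p.2|) ^ (2*s))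
        else 0) ≤ C) := by
  have hk : (2:ℝ) < 2*s := by linarith
  set w : ℤ × ℤ → ℝ := fun q => ((|(q.1 : ℝ)| + |(q.2 : ℝ)|) ^ (2*s))⁻¹ with hw
  have hwsum : Summable w := aux_summable_lattice hk
  have hwnonneg : ∀ q, 0 ≤ w q := fun q => by positivity
  set K : ℝ := ∑' q, w q with hK
  have hKnonneg : 0 ≤ K := tsum_nonneg hwnonneg
  refine ⟨2 * 2 ^ (2*s) * K + 1, by positivity, fun m n hn hm => ?_⟩
  set C : ℝ := 2 * 2 ^ (2*s) * K + 1 with hC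
  have hnpos : (0:ℝ) < |(n:ℝ)| := abs_pos.mpr (Int.cast_ne_zero.mpr hn)
  -- the translation-reflection equiv
  set e : ℤ × ℤ ≃ ℤ × ℤ :=
    ⟨fun p => (m - p.1, n - p.2), fun p => (m - p.1, n - p.2),
     fun p => by simp, fun p => by simp⟩ with he
  have hwe : Summable fun p => w (e p) := e.summable_iff.mpr hwsum
  have hwe_tsum : (∑' p, w (e p)) = K := e.tsum_eq w
  -- abbreviations
  set Q : ℝ := |(n:ℝ)| ^ (-4 + 4*b' - 4*b) with hQ
  have hQnonneg : 0 ≤ Q := by positivity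
  set F : ℤ × ℤ → ℝ := fun p =>
    (if p.2 ≠ 0 ∧ p.2 ≠ n ∧ (1:ℝ)/2 ≤ (p.2:ℝ)/(n:ℝ) then
          (m:ℝ)^2 * Q * (|(m:ℝ)| + |(n:ℝ)|) ^ (2*s) /
            ((|(p.1:ℝ)| + |(p.2:ℝ)|) ^ (2*s) *
             (|(m:ℝ) - p.1| + |(n:ℝ) - p.2|) ^ (2*s))
        else 0) with hF
  set G : ℤ × ℤ → ℝ := fun p =>
    (m:ℝ)^2 * Q * 2 ^ (2*s) * (w p + w (e p)) with hG
  have hFnonneg : ∀ p, 0 ≤ F p := by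
    intro p
    simp only [hF]
    split
    · positivity
    · exact le_rfl
  have hFG : ∀ p, F p ≤ G p := by
    intro p
    simp only [hF, hG]
    split
    case isFalse => positivity
    case isTrue hcond =>
      obtain ⟨h1, h2, -⟩ := hcond
      set A : ℝ := |(p.1:ℝ)| + |(p.2:ℝ)| with hA
      set B : ℝ := |(m:ℝ) - p.1| + |(n:ℝ) - p.2| with hB
      have hApos : 0 < A := by
        have : (0:ℝ) < |(p.2:ℝ)| := abs_pos.mpr (Int.cast_ne_zero.mpr h1)
        have := abs_nonneg (p.1:ℝ); linarith
      have hBpos : 0 < B := by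
        have hne : (n:ℝ) - p.2 ≠ 0 := by
          rw [sub_ne_zero]; exact_mod_cast (Ne.symm h2)
        have : (0:ℝ) < |(n:ℝ) - p.2| := abs_pos.mpr hne
        have := abs_nonneg ((m:ℝ) - p.1); linarith
      have hwp : w p = (A ^ (2*s))⁻¹ := rfl
      have hwep : w (e p) = (B ^ (2*s))⁻¹ := by
        simp only [hw, he, Equiv.coe_fn_mk, hB]
        push_cast
        ring_nf
      have htri : |(m:ℝ)| + |(n:ℝ)| ≤ A + B := by
        have h1 : |(m:ℝ)| ≤ |(p.1:ℝ)| + |(m:ℝ) - p.1| := by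
          have := abs_add_le (p.1:ℝ) ((m:ℝ) - p.1); simpa using this
        have h2 : |(n:ℝ)| ≤ |(p.2:ℝ)| + |(n:ℝ) - p.2| := by
          have := abs_add_le (p.2:ℝ) ((n:ℝ) - p.2); simpa using this
        simp only [hA, hB]; linarith
      have hsplit : (|(m:ℝ)| + |(n:ℝ)|) ^ (2*s) ≤ 2 ^ (2*s) * (A ^ (2*s) + B ^ (2*s)) := by
        have h0 : (|(m:ℝ)| + |(n:ℝ)|) ^ (2*s) ≤ (A + B) ^ (2*s) :=
          Real.rpow_le_rpow (by positivity) htri (by linarith)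
        have h1 : A + B ≤ 2 * max A B := by
          rcases max_cases A B with ⟨hmax, _⟩ | ⟨hmax, _⟩ <;> rw [hmax] <;> linarith
        have h2 : (A + B) ^ (2*s) ≤ (2 * max A B) ^ (2*s) :=
          Real.rpow_le_rpow (by positivity) h1 (by linarith)
        have h3 : (2 * max A B) ^ (2*s) = 2 ^ (2*s) * (max A B) ^ (2*s) :=
          Real.mul_rpow (by norm_num) (le_max_of_le_left hApos.le)
        have h4 : (max A B) ^ (2*s) ≤ A ^ (2*s) + B ^ (2*s) := by
          rcases max_cases A B with ⟨hmax, _⟩ | ⟨hmax, _⟩ <;> rw [hmax]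
          · have : (0:ℝ) ≤ B ^ (2*s) := by positivity
            linarith
          · have : (0:ℝ) ≤ A ^ (2*s) := by positivity
            linarith
        calc (|(m:ℝ)| + |(n:ℝ)|) ^ (2*s) ≤ (2 * max A B) ^ (2*s) := h0.trans h2
          _ = 2 ^ (2*s) * (max A B) ^ (2*s) := h3
          _ ≤ 2 ^ (2*s) * (A ^ (2*s) + B ^ (2*s)) := by
              have : (0:ℝ) ≤ 2 ^ (2*s) := by positivity
              nlinarith
      have hApow : 0 < A ^ (2*s) := Real.rpow_pos_of_pos hApos _
      have hBpow : 0 < B ^ (2*s) := Real.rpow_pos_of_pos hBpos _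
      rw [hwp, hwep, div_le_iff₀ (by positivity)]
      have key : (A ^ (2*s))⁻¹ + (B ^ (2*s))⁻¹ = (A ^ (2*s) + B ^ (2*s)) / (A ^ (2*s) * B ^ (2*s)) := by
        field_simp; ring
      have hmq : (0:ℝ) ≤ (m:ℝ)^2 * Q := by positivity
      calc (m:ℝ)^2 * Q * (|(m:ℝ)| + |(n:ℝ)|) ^ (2*s)
          ≤ (m:ℝ)^2 * Q * (2 ^ (2*s) * (A ^ (2*s) + B ^ (2*s))) :=
            mul_le_mul_of_nonneg_left hsplit hmq
        _ = (m:ℝ)^2 * Q * 2 ^ (2*s) * ((A ^ (2*s))⁻¹ + (B ^ (2*s))⁻¹) * (A ^ (2*s) * B ^ (2*s)) := by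
            rw [key]; field_simp
  have hGsum : Summable G := by
    apply Summable.mul_left
    exact hwsum.add hwe
  have hFsum : Summable F := hGsum.of_nonneg_of_le hFnonneg hFG
  have htsum : (∑' p, F p) ≤ (m:ℝ)^2 * Q * 2 ^ (2*s) * (2 * K) := by
    have h1 : (∑' p, F p) ≤ ∑' p, G p := Summable.tsum_le_tsum hFG hFsum hGsum
    have h2 : (∑' p, G p) = (m:ℝ)^2 * Q * 2 ^ (2*s) * (K + K) := by
      simp only [hG]
      rw [tsum_mul_left, Summable.tsum_add hwsum hwe, hwe_tsum]
    rw [h2] at h1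
    linarith [h1]
  -- now the two bounds
  have hQrw : Q = (|(n:ℝ)| ^ (4 - 4*(b'-b)))⁻¹ := by
    rw [hQ, ← Real.rpow_neg hnpos.le]
    ring_nf
  have hbound1 : (∑' p, F p) ≤ C * (m:ℝ)^2 / |(n:ℝ)| ^ (4 - 4*(b' - b)) := by
    have hDpos : (0:ℝ) < |(n:ℝ)| ^ (4 - 4*(b'-b)) := Real.rpow_pos_of_pos hnpos _
    have h3 : (m:ℝ)^2 * Q * 2 ^ (2*s) * (2 * K) ≤ C * ((m:ℝ)^2 * Q) := by
      have h4 : (0:ℝ) ≤ (m:ℝ)^2 * Q := by positivity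
      have h5 : (m:ℝ)^2 * Q * 2 ^ (2*s) * (2 * K) = (2 * 2 ^ (2*s) * K) * ((m:ℝ)^2 * Q) := by ring
      rw [h5, hC]
      nlinarith
    have h6 : C * ((m:ℝ)^2 * Q) = C * (m:ℝ)^2 / |(n:ℝ)| ^ (4 - 4*(b' - b)) := by
      rw [hQrw]; field_simp
    linarith [htsum, h3, h6 ▸ h3]
  refine ⟨hbound1, ?_⟩
  have hm2 : (m:ℝ)^2 ≤ |(n:ℝ)| ^ (4 - 4*(b' - b)) := by
    have h1 : (m:ℝ)^2 = |(m:ℝ)|^2 := (sq_abs _).symm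
    have h2 : |(m:ℝ)|^2 ≤ (|(n:ℝ)| ^ (2 - 2*(b'-b)))^2 :=
      pow_le_pow_left₀ (abs_nonneg _) hm.le 2
    have h3 : (|(n:ℝ)| ^ (2 - 2*(b'-b)))^2 = |(n:ℝ)| ^ (4 - 4*(b'-b)) := by
      rw [← Real.rpow_natCast (|(n:ℝ)| ^ (2 - 2*(b'-b))) 2, ← Real.rpow_mul hnpos.le]
      norm_num
      ring_nf
    rw [h1]; rw [h3] at h2; exact h2
  have hDpos : (0:ℝ) < |(n:ℝ)| ^ (4 - 4*(b'-b)) := Real.rpow_pos_of_pos hnpos _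
  have hCpos : (0:ℝ) < C := by rw [hC]; positivity
  calc (∑' p, F p) ≤ C * (m:ℝ)^2 / |(n:ℝ)| ^ (4 - 4*(b' - b)) := hbound1
    _ ≤ C := by
        rw [div_le_iff₀ hDpos]
        calc C * (m:ℝ)^2 ≤ C * |(n:ℝ)| ^ (4 - 4*(b' - b)) :=
          mul_le_mul_of_nonneg_left hm2 hCpos.le
end
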